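/- arXiv:1108.1613 — 4 statements merged into one kernel-verified Lean document; each statement's English description precedes it below -/
import Mathlib

section
/- If v : (R,∞) → ℝ is twice continuously differentiable, satisfies v''(r) + (d/dr)(v(r)/r) = 0 for every r > R, and ∫_R^∞ v(r)² r dr < ∞, then v(r) = 0 for every r > R. (In fact the general solution of the ODE is v(r) = c₁ r/2 + c₂/r, and the weighted square-integrability forces c₁ = c₂ = 0.) -/
open MeasureTheory Set

/-- A function with zero derivative on `Ioi R` is constant there. -/
lemma aux_const_on_Ioi {R : ℝ} {f : ℝ → ℝ}
    (hd : ∀ r ∈ Set.Ioi R, DifferentiableAt ℝ f r)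
    (h0 : ∀ r ∈ Set.Ioi R, deriv f r = 0)
    {a b : ℝ} (ha : a ∈ Set.Ioi R) (hb : b ∈ Set.Ioi R) : f a = f b := by
  refine (convex_Ioi R).is_const_of_fderivWithin_eq_zero
    (fun r hr => (hd r hr).differentiableWithinAt) (fun x hx => ?_) ha hb
  rw [fderivWithin_of_isOpen isOpen_Ioi hx]
  refine ContinuousLinearMap.ext_ring ?_
  have : fderiv ℝ f x 1 = deriv f x := rfl
  rw [this, h0 x hx]; rfl

lemma aux_not_integrable_inv {t : ℝ} (ht : 0 < t) :
    ¬ IntegrableOn (fun r : ℝ => r⁻¹) (Set.Ioi t) := by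
  intro h
  have h' : IntegrableOn (fun r : ℝ => r ^ (-1 : ℝ)) (Set.Ioi t) := by
    refine h.congr_fun (fun x hx => ?_) measurableSet_Ioi
    rw [Real.rpow_neg_one]
  rw [integrableOn_Ioi_rpow_iff ht] at h'
  linarith

/-- A solution of v'' + (v/r)' = 0 on (R, ∞) with ∫_R^∞ v² r dr < ∞ vanishes identically. -/
theorem radial_exterior_vanishing
    (R : ℝ) (hR : 0 < R) (v : ℝ → ℝ)
    (hv : ContDiffOn ℝ 2 v (Set.Ioi R))
    (hode : ∀ r : ℝ, R < r → deriv (deriv v) r + deriv (fun s => v s / s) r = 0)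
    (hint : IntegrableOn (fun r => (v r) ^ 2 * r) (Set.Ioi R)) :
    ∀ r : ℝ, R < r → v r = 0 := by
  have hopen : IsOpen (Set.Ioi R) := isOpen_Ioi
  have hpos : ∀ r ∈ Set.Ioi R, 0 < r := fun r hr => hR.trans hr
  have hvd : ∀ r ∈ Set.Ioi R, DifferentiableAt ℝ v r := fun r hr =>
    (hv.contDiffAt (hopen.mem_nhds hr)).differentiableAt (by norm_num)
  have hdv : ContDiffOn ℝ 1 (deriv v) (Set.Ioi R) := by
    have := hv.deriv_of_isOpen hopen (m := 1) (by norm_num)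
    simpa using this
  have hdvd : ∀ r ∈ Set.Ioi R, DifferentiableAt ℝ (deriv v) r := fun r hr =>
    (hdv.contDiffAt (hopen.mem_nhds hr)).differentiableAt (by norm_num)
  -- the function w = v' + v/r
  set w : ℝ → ℝ := fun r => deriv v r + v r / r with hw
  have hq : ∀ r ∈ Set.Ioi R, DifferentiableAt ℝ (fun s => v s / s) r := fun r hr =>
    (hvd r hr).div differentiableAt_id (ne_of_gt (hpos r hr))
  have hwd : ∀ r ∈ Set.Ioi R, DifferentiableAt ℝ w r := fun r hr =>
    (hdvd r hr).add (hq r hr)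
  have hw0 : ∀ r ∈ Set.Ioi R, deriv w r = 0 := by
    intro r hr
    have : deriv w r = deriv (deriv v) r + deriv (fun s => v s / s) r :=
      deriv_add (hdvd r hr) (hq r hr)
    rw [this, hode r hr]
  have hr0m : R + 1 ∈ Set.Ioi R := by simp
  obtain ⟨c₁, hwc⟩ : ∃ c, ∀ r ∈ Set.Ioi R, deriv v r + v r / r = c :=
    ⟨w (R + 1), fun r hr => aux_const_on_Ioi hwd hw0 hr hr0m⟩
  -- the function g = r v(r) - c₁ r²/2
  set g : ℝ → ℝ := fun r => r * v r - c₁ * r ^ 2 / 2 with hg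
  have hgd : ∀ r ∈ Set.Ioi R, DifferentiableAt ℝ g r := fun r hr =>
    (differentiableAt_fun_id.mul (hvd r hr)).sub (by fun_prop)
  have hg0 : ∀ r ∈ Set.Ioi R, deriv g r = 0 := by
    intro r hr
    have hrne : r ≠ 0 := ne_of_gt (hpos r hr)
    have h1 : deriv g r = (deriv v r * r + v r) - c₁ * r := by
      rw [hg]
      rw [deriv_fun_sub (by have h : DifferentiableAt ℝ (fun s => s * v s) r := differentiableAt_fun_id.mul (hvd r hr); exact h)
        (by fun_prop : DifferentiableAt ℝ (fun s : ℝ => c₁ * s ^ 2 / 2) r)]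
      rw [deriv_fun_mul differentiableAt_fun_id (hvd r hr)]
      have h2 : deriv (fun r : ℝ => c₁ * r ^ 2 / 2) r = c₁ * r := by
        rw [show (fun r : ℝ => c₁ * r ^ 2 / 2) = fun r : ℝ => (c₁ / 2) * r ^ 2 by
          funext x; ring]
        rw [deriv_const_mul _ (by fun_prop), deriv_pow_field]
        ring
      rw [h2]
      simp only [deriv_id'']
      ring
    have h3 := hwc r hr
    have : deriv v r * r + v r = c₁ * r := by
      field_simp at h3
      linarith [h3]
    rw [h1, this]; ring
  obtain ⟨c₂, hgc⟩ : ∃ c, ∀ r ∈ Set.Ioi R, r * v r - c₁ * r ^ 2 / 2 = c :=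
    ⟨g (R + 1), fun r hr => aux_const_on_Ioi hgd hg0 hr hr0m⟩
  have hrepr : ∀ r ∈ Set.Ioi R, v r = c₁ * r / 2 + c₂ / r := by
    intro r hr
    have hrne : r ≠ 0 := ne_of_gt (hpos r hr)
    have := hgc r hr
    field_simp
    field_simp at this
    linarith
  -- c₁ = 0
  have hc10 : c₁ = 0 := by
    by_contra hc1
    set M : ℝ := max R (Real.sqrt (4 * |c₂| / |c₁|)) with hM
    have hMR : R ≤ M := le_max_left _ _
    have hMpos : 0 < M := lt_of_lt_of_le hR hMR
    have hbound : ∀ r ∈ Set.Ioi M, (c₁ ^ 2 * M ^ 4 / 16) * r⁻¹ ≤ v r ^ 2 * r := by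
      intro r hr
      have hrM : M < r := hr
      have hrpos : 0 < r := hMpos.trans hrM
      have hrR : r ∈ Set.Ioi R := lt_of_le_of_lt hMR hrM
      have hsq : 4 * |c₂| / |c₁| ≤ r ^ 2 := by
        have h1 : Real.sqrt (4 * |c₂| / |c₁|) ≤ r := le_of_lt
          (lt_of_le_of_lt (le_max_right R _) hrM)
        have h2 : 0 ≤ 4 * |c₂| / |c₁| := by positivity
        calc 4 * |c₂| / |c₁| = Real.sqrt (4 * |c₂| / |c₁|) ^ 2 := (Real.sq_sqrt h2).symm
          _ ≤ r ^ 2 := by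
            apply pow_le_pow_left₀ (Real.sqrt_nonneg _) h1
      have hc1pos : 0 < |c₁| := abs_pos.mpr hc1
      have hkey : |c₂| / r ≤ |c₁| * r / 4 := by
        rw [div_le_div_iff₀ hrpos (by norm_num)]
        have : 4 * |c₂| ≤ |c₁| * r ^ 2 := by
          rw [div_le_iff₀ hc1pos] at hsq
          nlinarith
        nlinarith
      have hlow : |c₁| * r / 4 ≤ |v r| := by
        rw [hrepr r hrR]
        have h1 : |c₁ * r / 2| ≤ |c₁ * r / 2 + c₂ / r| + |c₂ / r| := by
          have := abs_add_le (c₁ * r / 2 + c₂ / r) (-(c₂ / r))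
          simpa using this
        have h2 : |c₁ * r / 2| = |c₁| * r / 2 := by
          rw [abs_div, abs_mul, abs_of_pos hrpos]; norm_num
        have h3 : |c₂ / r| = |c₂| / r := by
          rw [abs_div, abs_of_pos hrpos]
        nlinarith [h1]
      have hvsq : (|c₁| * r / 4) ^ 2 ≤ v r ^ 2 := by
        have := sq_abs (v r)
        nlinarith [hlow, abs_nonneg (v r), mul_pos (mul_pos hc1pos hrpos) (by norm_num : (0:ℝ) < 1/4)]
      have hr4 : M ^ 4 ≤ r ^ 4 := by
        apply pow_le_pow_left₀ hMpos.le hrM.le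
      have hrinv : r⁻¹ = r ^ 3 / r ^ 4 := by
        field_simp
      have hsq2 : |c₁| ^ 2 = c₁ ^ 2 := sq_abs c₁
      calc (c₁ ^ 2 * M ^ 4 / 16) * r⁻¹ ≤ (c₁ ^ 2 * r ^ 4 / 16) * r⁻¹ := by
            apply mul_le_mul_of_nonneg_right _ (inv_nonneg.mpr hrpos.le)
            have : (0:ℝ) ≤ c₁ ^ 2 / 16 := by positivity
            nlinarith
        _ = c₁ ^ 2 * r ^ 3 / 16 := by field_simp
        _ = (|c₁| * r / 4) ^ 2 * r := by rw [← hsq2]; ring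
        _ ≤ v r ^ 2 * r := by
            apply mul_le_mul_of_nonneg_right hvsq hrpos.le
    have hintM : IntegrableOn (fun r => v r ^ 2 * r) (Set.Ioi M) :=
      hint.mono (Set.Ioi_subset_Ioi hMR) le_rfl
    have hgint : IntegrableOn (fun r : ℝ => (c₁ ^ 2 * M ^ 4 / 16) * r⁻¹) (Set.Ioi M) := by
      refine Integrable.mono' hintM ?_ ?_
      · exact ((measurable_const.mul measurable_inv).aestronglyMeasurable)
      · filter_upwards [ae_restrict_mem measurableSet_Ioi] with r hr
        have h := hbound r hr
        have hrpos : 0 < r := hMpos.trans hr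
        rw [Real.norm_eq_abs, abs_of_nonneg (by positivity)]
        exact h
    have : IntegrableOn (fun r : ℝ => r⁻¹) (Set.Ioi M) := by
      have hne : (c₁ ^ 2 * M ^ 4 / 16) ≠ 0 := by positivity
      have h2 : IntegrableOn
          (fun x : ℝ => (c₁ ^ 2 * M ^ 4 / 16)⁻¹ * ((c₁ ^ 2 * M ^ 4 / 16) * x⁻¹))
          (Set.Ioi M) := hgint.const_mul _
      refine h2.congr_fun (fun x hx => ?_) measurableSet_Ioi
      beta_reduce
      rw [← mul_assoc, inv_mul_cancel₀ hne, one_mul]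
    exact aux_not_integrable_inv hMpos this
  -- c₂ = 0
  have hc20 : c₂ = 0 := by
    by_contra hc2
    have hgint : IntegrableOn (fun r : ℝ => c₂ ^ 2 * r⁻¹) (Set.Ioi R) := by
      refine hint.congr_fun (fun x hx => ?_) measurableSet_Ioi
      have hxpos : 0 < x := hpos x hx
      have hxne : x ≠ 0 := ne_of_gt hxpos
      beta_reduce
      rw [hrepr x hx, hc10]
      field_simp
      ring
    have : IntegrableOn (fun r : ℝ => r⁻¹) (Set.Ioi R) := by
      have h2 : IntegrableOn (fun x : ℝ => (c₂ ^ 2)⁻¹ * (c₂ ^ 2 * x⁻¹)) (Set.Ioi R) :=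
        hgint.const_mul _
      refine h2.congr_fun (fun x hx => ?_) measurableSet_Ioi
      beta_reduce
      rw [← mul_assoc, inv_mul_cancel₀ (pow_ne_zero _ hc2), one_mul]
    exact aux_not_integrable_inv hR this
  intro r hr
  rw [hrepr r hr, hc10, hc20]
  simp
end

section
/- Weighted momentum identity (one-dimensional case): Let μ > 0, λ + 2μ > 0, a > 0, R > 0, T > 0. Let ρ, u : [0,T] × ℝ → ℝ be twice continuously differentiable with ρ ≥ 0, satisfying ∂_t ρ + ∂_x(ρu) = 0 and ∂_t(ρu) + ∂_x(ρu²) + a ∂_x ρ = (λ+2μ) ∂²_x u on [0,T] × ℝ, and suppose ρ(t,x) = 0 and u(t,x) = 0 whenever |x| ≥ R and t ∈ [0,T]. Then for every t ∈ [0,T]: ∫_ℝ ρ(t,x) u(t,x) x dx − ∫_ℝ ρ(0,x) u(0,x) x dx = ∫_0^t ∫_ℝ ( ρ(τ,x) u(τ,x)² + a ρ(τ,x) ) dx dτ. -/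
open MeasureTheory Set Function

lemma pderiv_fst (f : ℝ → ℝ → ℝ) (hf : ContDiff ℝ 2 (uncurry f)) (t x : ℝ) :
    HasDerivAt (fun s => f s x) (fderiv ℝ (uncurry f) (t, x) (1, 0)) t := by
  have h1 : HasFDerivAt (uncurry f) (fderiv ℝ (uncurry f) (t, x)) (t, x) :=
    ((hf.differentiable (by norm_num)) (t, x)).hasFDerivAt
  have h2 : HasDerivAt (fun s : ℝ => (s, x)) ((1 : ℝ), (0 : ℝ)) t :=
    (hasDerivAt_id t).prodMk (hasDerivAt_const t x)
  exact h1.comp_hasDerivAt t h2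

lemma cont_pderiv (f : ℝ → ℝ → ℝ) (hf : ContDiff ℝ 2 (uncurry f)) (v : ℝ × ℝ) :
    Continuous (fun p : ℝ × ℝ => fderiv ℝ (uncurry f) p v) :=
  (hf.continuous_fderiv (by norm_num)).clm_apply continuous_const

lemma contDiff_fixed_fst (f : ℝ → ℝ → ℝ) (hf : ContDiff ℝ 2 (uncurry f)) (t : ℝ) :
    ContDiff ℝ 2 (fun y => f t y) :=
  hf.comp ((contDiff_const.prodMk contDiff_id))

lemma deriv_diff_cont (g : ℝ → ℝ) (hg : ContDiff ℝ 2 g) :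
    Differentiable ℝ (deriv g) ∧ Continuous (deriv g) := by
  have h2 : ContDiff ℝ ((1 : ℕ) + 1) g := by exact_mod_cast hg
  have := (contDiff_succ_iff_deriv.mp h2).2.2
  exact ⟨this.differentiable (by norm_num), this.continuous⟩

/-- Weighted momentum identity for the 1D isothermal compressible Navier–Stokes system. -/
theorem weighted_momentum_identity_1d
    (μ lam a R T : ℝ) (hμ : 0 < μ) (hlam : 0 < lam + 2 * μ) (ha : 0 < a)
    (hR : 0 < R) (hT : 0 < T)
    (ρ u : ℝ → ℝ → ℝ)
    (hρ : ContDiff ℝ 2 (Function.uncurry ρ))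
    (hu : ContDiff ℝ 2 (Function.uncurry u))
    (hρ_nonneg : ∀ t x, 0 ≤ ρ t x)
    (hmass : ∀ t x, t ∈ Set.Icc (0 : ℝ) T →
      deriv (fun s => ρ s x) t + deriv (fun y => ρ t y * u t y) x = 0)
    (hmom : ∀ t x, t ∈ Set.Icc (0 : ℝ) T →
      deriv (fun s => ρ s x * u s x) t + deriv (fun y => ρ t y * u t y ^ 2) x
        + a * deriv (fun y => ρ t y) x
        = (lam + 2 * μ) * deriv (deriv (fun y => u t y)) x)
    (hsupp : ∀ t x, t ∈ Set.Icc (0 : ℝ) T → R ≤ |x| → ρ t x = 0 ∧ u t x = 0) :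
    ∀ t ∈ Set.Icc (0 : ℝ) T,
      (∫ x, ρ t x * u t x * x) - (∫ x, ρ 0 x * u 0 x * x)
        = ∫ τ in (0 : ℝ)..t, ∫ x, (ρ τ x * (u τ x) ^ 2 + a * ρ τ x) := by
  set c : ℝ := lam + 2 * μ with hc
  set S : ℝ := R + 1 with hS
  have hSR : R ≤ S := by rw [hS]; linarith
  have hS0 : (0:ℝ) < S := by linarith
  -- the momentum P and its time-partial Pt
  set P : ℝ → ℝ → ℝ := fun t x => ρ t x * u t x with hPdef
  have hPc2 : ContDiff ℝ 2 (uncurry P) := hρ.mul hu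
  set Pt : ℝ → ℝ → ℝ := fun t x => fderiv ℝ (uncurry P) (t, x) (1, 0) with hPtdef
  have hPt : ∀ t x, HasDerivAt (fun s => P s x) (Pt t x) t := fun t x =>
    pderiv_fst P hPc2 t x
  have hPtc : Continuous (fun p : ℝ × ℝ => Pt p.1 p.2) := by
    have := cont_pderiv P hPc2 (1, 0)
    exact this
  have hρc : Continuous (uncurry ρ) := hρ.continuous
  have huc : Continuous (uncurry u) := hu.continuous
  have hPc : Continuous (uncurry P) := hPc2.continuous
  -- vanishing outside [-S,S]
  have hout : ∀ t ∈ Icc (0:ℝ) T, ∀ x ∉ Ioc (-S) S, ρ t x = 0 ∧ u t x = 0 := by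
    intro t ht x hx
    apply hsupp t x ht
    simp only [mem_Ioc, not_and_or, not_lt, not_le] at hx
    have hSx : S ≤ |x| := by
      rcases hx with h | h
      · exact le_abs.mpr (Or.inr (by linarith))
      · exact le_abs.mpr (Or.inl (by linarith))
    linarith
  -- reduce integrals over ℝ to interval integrals
  have hredP : ∀ t ∈ Icc (0:ℝ) T, (∫ x, ρ t x * u t x * x) = ∫ x in (-S)..S, P t x * x := by
    intro t ht
    rw [intervalIntegral.integral_of_le (by linarith)]
    refine (setIntegral_eq_integral_of_forall_compl_eq_zero ?_).symm
    intro x hx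
    simp [hPdef, (hout t ht x hx).1]
  set G : ℝ → ℝ := fun t => ∫ x in (-S)..S, (ρ t x * (u t x) ^ 2 + a * ρ t x) with hGdef
  have hredG : ∀ t ∈ Icc (0:ℝ) T, (∫ x, (ρ t x * (u t x) ^ 2 + a * ρ t x)) = G t := by
    intro t ht
    simp only [hGdef]
    rw [intervalIntegral.integral_of_le (by linarith)]
    refine (setIntegral_eq_integral_of_forall_compl_eq_zero ?_).symm
    intro x hx
    simp [(hout t ht x hx).1]
  set F : ℝ → ℝ := fun t => ∫ x in (-S)..S, P t x * x with hFdef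
  -- derivative of F
  have hPcx : ∀ t : ℝ, Continuous fun x => P t x * x := fun t =>
    (hPc.comp (Continuous.prodMk_right t)).mul continuous_id
  have hPtcx : ∀ t : ℝ, Continuous fun x => Pt t x * x := fun t =>
    (hPtc.comp (Continuous.prodMk_right t)).mul continuous_id
  have hF : ∀ t₀ : ℝ, HasDerivAt F (∫ x in (-S)..S, Pt t₀ x * x) t₀ := by
    intro t₀
    obtain ⟨C, hC⟩ := (IsCompact.exists_bound_of_continuousOn
      ((isCompact_Icc (a := t₀ - 1) (b := t₀ + 1)).prod (isCompact_Icc (a := -S) (b := S)))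
      ((hPtc.mul continuous_snd).continuousOn))
    have key := intervalIntegral.hasDerivAt_integral_of_dominated_loc_of_deriv_le
      (F := fun t x => P t x * x) (F' := fun t x => Pt t x * x) (x₀ := t₀)
      (a := -S) (b := S) (μ := volume) (bound := fun _ => C) (s := Metric.ball t₀ 1) (Metric.ball_mem_nhds t₀ one_pos)
      (Filter.Eventually.of_forall fun t => (hPcx t).aestronglyMeasurable)
      ((hPcx t₀).intervalIntegrable _ _)
      ((hPtcx t₀).aestronglyMeasurable)
      (Filter.Eventually.of_forall ?_)
      (continuous_const.intervalIntegrable _ _)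
      (Filter.Eventually.of_forall ?_)
    · exact key.2
    · intro x hx t htb
      have hx' : x ∈ Icc (-S) S := by
        rcases uIoc_subset_uIcc hx with h
        rwa [uIcc_of_le (by linarith)] at h
      have ht' : t ∈ Icc (t₀ - 1) (t₀ + 1) := by
        rw [Metric.mem_ball, Real.dist_eq, abs_lt] at htb
        constructor <;> linarith [htb.1, htb.2]
      exact hC (t, x) (mk_mem_prod ht' hx')
    · intro x _ t _
      exact (hPt t x).mul_const x
  -- identification of the derivative via integration by parts
  have hkey : ∀ τ ∈ Icc (0:ℝ) T, (∫ x in (-S)..S, Pt τ x * x) = G τ := by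
    intro τ hτ
    have huτ : ContDiff ℝ 2 (fun y => u τ y) := contDiff_fixed_fst u hu τ
    have hρτ : ContDiff ℝ 2 (fun y => ρ τ y) := contDiff_fixed_fst ρ hρ τ
    obtain ⟨hud, huc'⟩ := deriv_diff_cont _ huτ
    set W : ℝ → ℝ := fun y =>
      c * deriv (fun z => u τ z) y - (ρ τ y * (u τ y) ^ 2 + a * ρ τ y) with hWdef
    have hW : ∀ y, HasDerivAt W
        (c * deriv (deriv (fun z => u τ z)) y
          - (deriv (fun y => ρ τ y * u τ y ^ 2) y + a * deriv (fun y => ρ τ y) y)) y := by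
      intro y
      refine HasDerivAt.sub ?_ (HasDerivAt.add ?_ ?_)
      · exact ((hud y).hasDerivAt).const_mul c
      · have : DifferentiableAt ℝ (fun y => ρ τ y * u τ y ^ 2) y :=
          ((hρτ.differentiable (by norm_num)) y).mul
            (((huτ.differentiable (by norm_num)) y).pow 2)
        exact this.hasDerivAt
      · exact (((hρτ.differentiable (by norm_num)) y).hasDerivAt).const_mul a
    have hWval : ∀ y, HasDerivAt W (Pt τ y) y := by
      intro y
      have hm := hmom τ y hτ
      have hd : deriv (fun s => ρ s y * u s y) τ = Pt τ y := (hPt τ y).deriv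
      rw [hd] at hm
      have := hW y
      have heq : c * deriv (deriv (fun z => u τ z)) y
          - (deriv (fun y => ρ τ y * u τ y ^ 2) y + a * deriv (fun y => ρ τ y) y)
          = Pt τ y := by linarith
      rwa [heq] at this
    -- vanishing of W at ±S
    have hder0 : ∀ y : ℝ, R < |y| → deriv (fun z => u τ z) y = 0 := by
      intro y hy
      have hopen : IsOpen {z : ℝ | R < |z|} := isOpen_lt continuous_const continuous_abs
      have hev : (fun z => u τ z) =ᶠ[nhds y] fun _ => (0 : ℝ) := by
        filter_upwards [hopen.mem_nhds hy] with z hz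
        exact (hsupp τ z hτ hz.le).2
      rw [hev.deriv_eq, deriv_const]
    have habsS : R < |S| := by rw [abs_of_pos hS0]; rw [hS]; linarith
    have habsS' : R < |(-S)| := by rw [abs_neg]; exact habsS
    have hWS : ∀ y : ℝ, R < |y| → W y = 0 := by
      intro y hy
      simp only [hWdef, hder0 y hy, (hsupp τ y hτ hy.le).1, mul_zero, zero_mul,
        zero_pow, add_zero, zero_add, sub_zero, zero_mul, mul_zero]
    have hW0 : W S = 0 ∧ W (-S) = 0 := ⟨hWS S habsS, hWS (-S) habsS'⟩
    -- integration by parts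
    have hPtτc : Continuous (fun x => Pt τ x) :=
      hPtc.comp (continuous_const.prodMk continuous_id)
    have hibp := intervalIntegral.integral_mul_deriv_eq_deriv_mul
      (u := fun y : ℝ => y) (u' := fun _ => (1:ℝ)) (v := W) (v' := fun y => Pt τ y)
      (a := -S) (b := S)
      (fun x _ => hasDerivAt_id x) (fun x _ => hWval x)
      ((continuous_const).intervalIntegrable _ _)
      (hPtτc.intervalIntegrable _ _)
    rw [hW0.1, hW0.2] at hibp
    simp only [mul_zero, sub_zero, zero_sub, one_mul] at hibp
    -- compute ∫ W
    have hWint : (∫ y in (-S)..S, W y) = - G τ := by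
      have h1 : (∫ y in (-S)..S, deriv (fun z => u τ z) y) = 0 := by
        rw [intervalIntegral.integral_deriv_eq_sub
          (fun y _ => (huτ.differentiable (by norm_num)) y)
          (huc'.intervalIntegrable _ _)]
        have e1 : u τ S = 0 := (hsupp τ S hτ (by rw [abs_of_pos hS0]; exact hSR)).2
        have e2 : u τ (-S) = 0 := (hsupp τ (-S) hτ (by rw [abs_neg, abs_of_pos hS0]; exact hSR)).2
        rw [e1, e2, sub_zero]
      have h2 : IntervalIntegrable (fun y => c * deriv (fun z => u τ z) y) volume (-S) S :=
        (continuous_const.mul huc').intervalIntegrable _ _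
      have h3 : IntervalIntegrable (fun y => ρ τ y * (u τ y) ^ 2 + a * ρ τ y) volume (-S) S := by
        apply Continuous.intervalIntegrable
        have := hρτ.continuous
        have := huτ.continuous
        fun_prop
      rw [hWdef]
      rw [intervalIntegral.integral_sub h2 h3, intervalIntegral.integral_const_mul, h1]
      simp [hGdef]
    rw [hWint] at hibp
    calc (∫ x in (-S)..S, Pt τ x * x) = ∫ x in (-S)..S, x * Pt τ x := by
          apply intervalIntegral.integral_congr; intro x _; ring
      _ = G τ := by rw [hibp]; ring
  -- FTC
  intro t ht
  have h0T : (0:ℝ) ∈ Icc (0:ℝ) T := ⟨le_refl 0, hT.le⟩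
  have hsub : uIcc (0:ℝ) t ⊆ Icc (0:ℝ) T := by
    rw [uIcc_of_le ht.1]
    exact Icc_subset_Icc (le_refl 0) ht.2
  have hGcont : Continuous G := by
    apply intervalIntegral.continuous_parametric_intervalIntegral_of_continuous'
    have : Continuous (uncurry fun t x => ρ t x * (u t x) ^ 2 + a * ρ t x) := by
      fun_prop
    exact this
  have hftc := intervalIntegral.integral_eq_sub_of_hasDerivAt
    (f := F) (f' := G) (a := 0) (b := t)
    (fun τ hτ => by
      have := hF τ
      rwa [hkey τ (hsub hτ)] at this)
    (hGcont.intervalIntegrable 0 t)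
  rw [hredP t ht, hredP 0 h0T]
  rw [show (∫ τ in (0:ℝ)..t, ∫ x, (ρ τ x * (u τ x) ^ 2 + a * ρ τ x)) = ∫ τ in (0:ℝ)..t, G τ
    from intervalIntegral.integral_congr fun τ hτ => hredG τ (hsub hτ)]
  rw [hftc]
end

section
/- Weighted sup bound by the Dirichlet integral for compactly supported radial fields in the plane: Let R > 0 and let u : ℝ² → ℝ² be continuously differentiable, radially symmetric in the sense that u(x) = (x/|x|) ū(|x|) for x ≠ 0 for some ū : (0,∞) → ℝ, and suppose u(x) = 0 for all |x| ≥ R. Then sup_{x ∈ ℝ²} (u(x)·x)² ≤ (R²/(2π)) ∫_{B_R} ‖Du(x)‖² dx, where ‖Du(x)‖ is the Frobenius norm of the derivative and B_R is the ball of radius R centered at the origin. -/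
open MeasureTheory Set Filter Topology
open scoped RealInnerProductSpace

noncomputable def rotL (a b : ℝ) : EuclideanSpace ℝ (Fin 2) →L[ℝ] EuclideanSpace ℝ (Fin 2) :=
  LinearMap.toContinuousLinearMap
  { toFun := fun v => (WithLp.equiv 2 (Fin 2 → ℝ)).symm ![a * v 0 - b * v 1, b * v 0 + a * v 1]
    map_add' := by
      intro v w
      ext i
      fin_cases i <;> simp [PiLp.add_apply] <;> ring
    map_smul' := by
      intro c v
      ext i
      fin_cases i <;> simp [PiLp.smul_apply, smul_eq_mul] <;> ring }

lemma rotL_apply0 (a b : ℝ) (v : EuclideanSpace ℝ (Fin 2)) : rotL a b v 0 = a * v 0 - b * v 1 := rfl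
lemma rotL_apply1 (a b : ℝ) (v : EuclideanSpace ℝ (Fin 2)) : rotL a b v 1 = b * v 0 + a * v 1 := rfl

lemma E2ext {v w : EuclideanSpace ℝ (Fin 2)} (h0 : v 0 = w 0) (h1 : v 1 = w 1) : v = w := by
  ext i; fin_cases i; exacts [h0, h1]

lemma rotL_norm (a b : ℝ) (hab : a^2 + b^2 = 1) (v : EuclideanSpace ℝ (Fin 2)) :
    ‖rotL a b v‖ = ‖v‖ := by
  rw [EuclideanSpace.norm_eq, EuclideanSpace.norm_eq]
  congr 1
  simp only [Fin.sum_univ_two, Real.norm_eq_abs, sq_abs, rotL_apply0, rotL_apply1]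
  linear_combination (v 0 ^ 2 + v 1 ^ 2) * hab

lemma rotL_rotL (a b : ℝ) (hab : a^2 + b^2 = 1) (v : EuclideanSpace ℝ (Fin 2)) :
    rotL a b (rotL a (-b) v) = v := by
  refine E2ext ?_ ?_ <;> simp only [rotL_apply0, rotL_apply1]
  · linear_combination (v 0) * hab
  · linear_combination (v 1) * hab

variable {u : EuclideanSpace ℝ (Fin 2) → EuclideanSpace ℝ (Fin 2)} {ubar : ℝ → ℝ}

lemma u_odd (hsym : ∀ x : EuclideanSpace ℝ (Fin 2), x ≠ 0 → u x = (ubar ‖x‖ / ‖x‖) • x)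
    (x : EuclideanSpace ℝ (Fin 2)) (hx : x ≠ 0) : u (-x) = -u x := by
  rw [hsym x hx, hsym (-x) (neg_ne_zero.mpr hx), norm_neg, smul_neg]

lemma u_zero (hc : Continuous u)
    (hsym : ∀ x : EuclideanSpace ℝ (Fin 2), x ≠ 0 → u x = (ubar ‖x‖ / ‖x‖) • x) :
    u 0 = 0 := by
  set e : EuclideanSpace ℝ (Fin 2) := EuclideanSpace.single 0 (1:ℝ) with he
  have hen : e ≠ 0 := by
    intro h
    have : ‖e‖ = 1 := by rw [he, EuclideanSpace.norm_single]; norm_num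
    rw [h, norm_zero] at this; norm_num at this
  have hse : Tendsto (fun t : ℝ => t • e) (𝓝[>] 0) (𝓝 0) := by
    have : Tendsto (fun t : ℝ => t • e) (𝓝 0) (𝓝 ((0:ℝ) • e)) :=
      (continuous_id.smul continuous_const).tendsto 0
    rw [zero_smul] at this
    exact this.mono_left nhdsWithin_le_nhds
  have h1 : Tendsto (fun t : ℝ => u (t • e)) (𝓝[>] 0) (𝓝 (u 0)) :=
    (hc.tendsto 0).comp hse
  have h3 : Tendsto (fun t : ℝ => -(u (-(t • e)))) (𝓝[>] 0) (𝓝 (-(u 0))) :=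
    ((hc.tendsto 0).comp (neg_zero (G := EuclideanSpace ℝ (Fin 2)) ▸ hse.neg)).neg
  have h2 : (fun t : ℝ => u (t • e)) =ᶠ[𝓝[>] 0] fun t => -(u (-(t • e))) := by
    filter_upwards [self_mem_nhdsWithin] with t ht
    rw [u_odd hsym (t • e) (smul_ne_zero (ne_of_gt ht) hen), neg_neg]
  have key : u 0 = -u 0 := tendsto_nhds_unique (h1.congr' h2) h3
  have h4 : (2:ℝ) • u 0 = 0 := by rw [two_smul]; nth_rewrite 1 [key]; abel
  simpa using (smul_eq_zero.mp h4).resolve_left (by norm_num)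

lemma u_equivariant (hc : Continuous u)
    (hsym : ∀ x : EuclideanSpace ℝ (Fin 2), x ≠ 0 → u x = (ubar ‖x‖ / ‖x‖) • x)
    (a b : ℝ) (hab : a^2 + b^2 = 1) (y : EuclideanSpace ℝ (Fin 2)) :
    u (rotL a b y) = rotL a b (u y) := by
  rcases eq_or_ne y 0 with rfl | hy
  · rw [map_zero, u_zero hc hsym, map_zero]
  · have hQy : rotL a b y ≠ 0 := by
      rw [← norm_ne_zero_iff, rotL_norm a b hab, norm_ne_zero_iff]; exact hy
    rw [hsym _ hQy, hsym _ hy, rotL_norm a b hab, _root_.map_smul]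

lemma fderiv_conj (hu : ContDiff ℝ 1 u)
    (hsym : ∀ x : EuclideanSpace ℝ (Fin 2), x ≠ 0 → u x = (ubar ‖x‖ / ‖x‖) • x)
    (a b : ℝ) (hab : a^2 + b^2 = 1) (y : EuclideanSpace ℝ (Fin 2))
    (v : EuclideanSpace ℝ (Fin 2)) :
    fderiv ℝ u (rotL a b y) (rotL a b v) = rotL a b (fderiv ℝ u y v) := by
  have hd := hu.differentiable one_ne_zero
  have h1 : HasFDerivAt (u ∘ rotL a b) ((fderiv ℝ u (rotL a b y)).comp (rotL a b)) y :=
    ((hd (rotL a b y)).hasFDerivAt).comp y ((rotL a b).hasFDerivAt)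
  have h2 : HasFDerivAt (⇑(rotL a b) ∘ u) ((rotL a b).comp (fderiv ℝ u y)) y :=
    ((rotL a b).hasFDerivAt).comp y ((hd y).hasFDerivAt)
  have heq : u ∘ rotL a b = ⇑(rotL a b) ∘ u := by
    funext z; exact u_equivariant hu.continuous hsym a b hab z
  rw [heq] at h1
  have := h1.unique h2
  calc fderiv ℝ u (rotL a b y) (rotL a b v)
      = ((fderiv ℝ u (rotL a b y)).comp (rotL a b)) v := rfl
    _ = ((rotL a b).comp (fderiv ℝ u y)) v := by rw [this]
    _ = rotL a b (fderiv ℝ u y v) := rfl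

lemma clm_comp_eval (T : EuclideanSpace ℝ (Fin 2) →L[ℝ] EuclideanSpace ℝ (Fin 2))
    (v : EuclideanSpace ℝ (Fin 2)) (i : Fin 2) :
    T v i = v 0 * T (EuclideanSpace.single 0 1) i + v 1 * T (EuclideanSpace.single 1 1) i := by
  have hv : v = v 0 • EuclideanSpace.single 0 (1:ℝ) + v 1 • EuclideanSpace.single 1 (1:ℝ) :=
    E2ext (by simp [EuclideanSpace.single_apply]) (by simp [EuclideanSpace.single_apply])
  conv_lhs => rw [hv]
  rw [map_add, _root_.map_smul, _root_.map_smul]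
  simp [PiLp.add_apply, PiLp.smul_apply, smul_eq_mul]

lemma frob_radial (hu : ContDiff ℝ 1 u)
    (hsym : ∀ x : EuclideanSpace ℝ (Fin 2), x ≠ 0 → u x = (ubar ‖x‖ / ‖x‖) • x)
    (x : EuclideanSpace ℝ (Fin 2)) (hx : x ≠ 0) :
    ∑ i : Fin 2, ∑ j : Fin 2, (fderiv ℝ u x (EuclideanSpace.single j 1) i) ^ 2 =
    ∑ i : Fin 2, ∑ j : Fin 2,
      (fderiv ℝ u (‖x‖ • EuclideanSpace.single 0 1) (EuclideanSpace.single j 1) i) ^ 2 := by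
  have hxn : ‖x‖ ≠ 0 := norm_ne_zero_iff.mpr hx
  set a : ℝ := x 0 / ‖x‖ with ha
  set b : ℝ := x 1 / ‖x‖ with hb
  have hx2 : ‖x‖^2 = x 0 ^2 + x 1 ^2 := by
    rw [EuclideanSpace.norm_eq, Real.sq_sqrt (by positivity)]
    simp [Fin.sum_univ_two, sq_abs]
  have hab : a^2 + b^2 = 1 := by
    rw [ha, hb, div_pow, div_pow, ← add_div, ← hx2, div_self (pow_ne_zero 2 hxn)]
  set y : EuclideanSpace ℝ (Fin 2) := ‖x‖ • EuclideanSpace.single 0 1 with hy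
  have hQy : rotL a b y = x := by
    refine E2ext ?_ ?_ <;>
      simp only [rotL_apply0, rotL_apply1, hy, PiLp.smul_apply, smul_eq_mul,
        EuclideanSpace.single_apply] <;>
    · simp only [ha, hb]
      simp
      field_simp
  set A := fderiv ℝ u y with hA
  set B := fderiv ℝ u x with hB
  have hBA : ∀ v, B v = rotL a b (A (rotL a (-b) v)) := by
    intro v
    have := fderiv_conj hu hsym a b hab y (rotL a (-b) v)
    rw [hQy, rotL_rotL a b hab v] at this
    rw [this]
  set m : Fin 2 → Fin 2 → ℝ := fun i j => A (EuclideanSpace.single j 1) i with hm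
  have hs0 : (EuclideanSpace.single (0 : Fin 2) (1:ℝ)) 0 = 1 := by simp
  have hs01 : (EuclideanSpace.single (0 : Fin 2) (1:ℝ)) 1 = 0 := by simp
  have hs10 : (EuclideanSpace.single (1 : Fin 2) (1:ℝ)) 0 = 0 := by simp
  have hs11 : (EuclideanSpace.single (1 : Fin 2) (1:ℝ)) 1 = 1 := by simp
  have comp : ∀ i j : Fin 2, B (EuclideanSpace.single j 1) i =
      rotL a b (A (rotL a (-b) (EuclideanSpace.single j 1))) i := fun i j => by rw [hBA]
  have hw0 : ∀ i : Fin 2, (A (rotL a (-b) (EuclideanSpace.single 0 1))) i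
      = a * m i 0 - b * m i 1 := by
    intro i
    rw [clm_comp_eval A _ i, rotL_apply0, rotL_apply1, hs0, hs01]
    simp only [hm]
    ring
  have hw1 : ∀ i : Fin 2, (A (rotL a (-b) (EuclideanSpace.single 1 1))) i
      = b * m i 0 + a * m i 1 := by
    intro i
    rw [clm_comp_eval A _ i, rotL_apply0, rotL_apply1, hs10, hs11]
    simp only [hm]
    ring
  have hmA : ∀ i j : Fin 2, A (EuclideanSpace.single j 1) i = m i j := fun i j => rfl
  simp only [Fin.sum_univ_two]
  rw [comp 0 0, comp 0 1, comp 1 0, comp 1 1]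
  rw [hmA 0 0, hmA 0 1, hmA 1 0, hmA 1 1]
  rw [rotL_apply0, rotL_apply1, rotL_apply0, rotL_apply1]
  rw [hw0 0, hw0 1, hw1 0, hw1 1]
  linear_combination (m 0 0 ^ 2 + m 0 1 ^ 2 + m 1 0 ^ 2 + m 1 1 ^ 2) * (a ^ 2 + b ^ 2 + 1) * hab

lemma ball_integral_eq
    {R : ℝ} (hR : 0 < R)
    (hu : ContDiff ℝ 1 u)
    (hsym : ∀ x : EuclideanSpace ℝ (Fin 2), x ≠ 0 → u x = (ubar ‖x‖ / ‖x‖) • x)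
    (hsupp : ∀ x : EuclideanSpace ℝ (Fin 2), R ≤ ‖x‖ → u x = 0) :
    (∫ y in Metric.ball (0 : EuclideanSpace ℝ (Fin 2)) R,
        ∑ i : Fin 2, ∑ j : Fin 2, (fderiv ℝ u y (EuclideanSpace.single j 1) i) ^ 2)
      = (2 * Real.pi) * ∫ t in Ioc (0:ℝ) R,
          t * ∑ i : Fin 2, ∑ j : Fin 2,
            (fderiv ℝ u (t • EuclideanSpace.single 0 1) (EuclideanSpace.single j 1) i) ^ 2 := by
  set F : EuclideanSpace ℝ (Fin 2) → ℝ :=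
    fun y => ∑ i : Fin 2, ∑ j : Fin 2, (fderiv ℝ u y (EuclideanSpace.single j 1) i) ^ 2 with hF
  set f : ℝ → ℝ := fun t => F (t • EuclideanSpace.single 0 1) with hf
  have hFcont : Continuous F := by
    apply continuous_finset_sum
    intro i _
    apply continuous_finset_sum
    intro j _
    have h1 : Continuous fun y => fderiv ℝ u y (EuclideanSpace.single j 1) :=
      (hu.continuous_fderiv one_ne_zero).clm_apply continuous_const
    exact ((PiLp.continuous_apply 2 _ i).comp h1).pow 2
  have hF0 : ∀ y : EuclideanSpace ℝ (Fin 2), R < ‖y‖ → F y = 0 := by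
    intro y hy
    have hopen : IsOpen {z : EuclideanSpace ℝ (Fin 2) | R < ‖z‖} :=
      isOpen_lt continuous_const continuous_norm
    have hev : u =ᶠ[nhds y] fun _ => 0 := by
      filter_upwards [hopen.mem_nhds hy] with z hz
      exact hsupp z (le_of_lt hz)
    have : fderiv ℝ u y = fderiv ℝ (fun _ => (0 : EuclideanSpace ℝ (Fin 2))) y :=
      hev.fderiv_eq
    rw [hF]
    simp [this]
  have hFrad : ∀ y : EuclideanSpace ℝ (Fin 2), F y = f ‖y‖ := by
    intro y
    rcases eq_or_ne y 0 with rfl | hy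
    · rw [hf]; simp
    · exact frob_radial hu hsym y hy
  have hfc : Continuous f := hFcont.comp (by fun_prop)
  have hsupport : HasCompactSupport F := by
    apply HasCompactSupport.intro (isCompact_closedBall (0 : EuclideanSpace ℝ (Fin 2)) R)
    intro y hy
    rw [Metric.mem_closedBall, dist_zero_right, not_le] at hy
    exact hF0 y hy
  have hInt : Integrable F := hFcont.integrable_of_hasCompactSupport hsupport
  -- ball integral = full integral
  have hsph : ∀ᵐ y : EuclideanSpace ℝ (Fin 2) ∂volume, ¬ ‖y‖ = R := by
    rw [ae_iff]
    push_neg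
    have : {y : EuclideanSpace ℝ (Fin 2) | ‖y‖ = R} = Metric.sphere 0 R := by
      ext y; simp [Metric.mem_sphere, dist_zero_right]
    rw [this]
    exact Measure.addHaar_sphere volume 0 R
  have hcompl : (∫ y in (Metric.ball (0 : EuclideanSpace ℝ (Fin 2)) R)ᶜ, F y) = 0 := by
    have : ∀ᵐ y : EuclideanSpace ℝ (Fin 2) ∂volume,
        y ∈ (Metric.ball (0 : EuclideanSpace ℝ (Fin 2)) R)ᶜ → F y = (fun _ => (0:ℝ)) y := by
      filter_upwards [hsph] with y hy hmem
      rw [mem_compl_iff, Metric.mem_ball, dist_zero_right, not_lt] at hmem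
      exact hF0 y (lt_of_le_of_ne hmem (fun h => hy h.symm))
    rw [setIntegral_congr_ae measurableSet_ball.compl this]
    simp
  have hball : (∫ y in Metric.ball (0 : EuclideanSpace ℝ (Fin 2)) R, F y) = ∫ y, F y := by
    rw [← integral_add_compl measurableSet_ball hInt, hcompl, add_zero]
  -- polar-type formula
  have hpolar : (∫ y : EuclideanSpace ℝ (Fin 2), F y)
      = (2:ℕ) • (volume (Metric.ball (0: EuclideanSpace ℝ (Fin 2)) 1)).toReal •
        ∫ t in Ioi (0:ℝ), t ^ (2-1) • f t := by
    have := integral_fun_norm_addHaar (volume : Measure (EuclideanSpace ℝ (Fin 2))) f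
    rw [finrank_euclideanSpace_fin] at this
    calc (∫ y : EuclideanSpace ℝ (Fin 2), F y) = ∫ y : EuclideanSpace ℝ (Fin 2), f ‖y‖ := by
          congr 1; funext y; exact hFrad y
      _ = _ := this
  have hvol : (volume (Metric.ball (0: EuclideanSpace ℝ (Fin 2)) 1)).toReal = Real.pi := by
    rw [EuclideanSpace.volume_ball, Fintype.card_fin]
    have h1 : Real.sqrt Real.pi ^ 2 = Real.pi := Real.sq_sqrt Real.pi_nonneg
    have h2 : ((2:ℕ):ℝ)/2 + 1 = 2 := by norm_num
    rw [h2, Real.Gamma_two, h1]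
    rw [ENNReal.ofReal_one, one_pow, one_mul, div_one]
    exact ENNReal.toReal_ofReal Real.pi_nonneg
  -- restrict Ioi to Ioc
  have hf0 : ∀ t : ℝ, R < t → f t = 0 := by
    intro t ht
    rw [hf]
    apply hF0
    rw [norm_smul, EuclideanSpace.norm_single]
    rw [Real.norm_eq_abs, abs_of_pos (lt_trans hR ht)]
    simpa using ht
  have hIoi : (∫ t in Ioi (0:ℝ), t ^ (2-1) • f t) = ∫ t in Ioc (0:ℝ) R, t * f t := by
    have hsplit : Ioi (0:ℝ) = Ioc 0 R ∪ Ioi R := (Ioc_union_Ioi_eq_Ioi hR.le).symm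
    have hi1 : IntegrableOn (fun t : ℝ => t * f t) (Ioc 0 R) :=
      (continuous_id.mul hfc).integrableOn_Ioc
    have hi2 : IntegrableOn (fun t : ℝ => t * f t) (Ioi R) := by
      apply (integrableOn_congr_fun ?_ measurableSet_Ioi).mpr (integrableOn_zero)
      intro t ht
      simp [hf0 t ht]
    have hIoiR : (∫ t in Ioi R, t * f t) = 0 := by
      rw [setIntegral_congr_fun measurableSet_Ioi (fun t ht => by rw [hf0 t ht, mul_zero])]
      simp
    have h21 : (2-1 : ℕ) = 1 := rfl
    simp only [h21, pow_one, smul_eq_mul]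
    rw [hsplit, setIntegral_union (Ioc_disjoint_Ioi le_rfl) measurableSet_Ioi hi1 hi2, hIoiR,
      add_zero]
  rw [hball, hpolar, hvol, hIoi]
  simp only [nsmul_eq_mul, smul_eq_mul, Nat.cast_ofNat]
  ring

lemma cs_key {r R : ℝ} (hr : 0 < r) (hrR : r < R) (q : ℝ → ℝ)
    (hq : ContinuousOn q (Icc r R)) :
    (∫ t in Ioc r R, t * q t) ^ 2 ≤ (R^2/2) * ∫ t in Ioc r R, t * q t ^ 2 := by
  have hsub : Ioc r R ⊆ Icc r R := Ioc_subset_Icc_self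
  have hw : IntegrableOn (fun t : ℝ => t) (Ioc r R) := by
    exact (continuousOn_id.integrableOn_Icc).mono_set hsub
  have hq1 : IntegrableOn (fun t => t * q t) (Ioc r R) := by
    exact ((continuousOn_id.mul hq).integrableOn_Icc).mono_set hsub
  have hq2 : IntegrableOn (fun t => t * q t ^ 2) (Ioc r R) := by
    exact ((continuousOn_id.mul (hq.pow 2)).integrableOn_Icc).mono_set hsub
  have hA : (∫ t in Ioc r R, t) = (R^2 - r^2)/2 := by
    rw [← intervalIntegral.integral_of_le hrR.le]
    simp [integral_id]
    try ring
  set A : ℝ := (R^2 - r^2)/2 with hAdef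
  have hApos : 0 < A := by
    have : r^2 < R^2 := by nlinarith
    simp only [hAdef]; linarith
  set B : ℝ := ∫ t in Ioc r R, t * q t with hBdef
  set c : ℝ := B / A with hc
  have expand : ∀ t ∈ Ioc r R, t * (q t - c)^2 = t * q t ^2 - (2*c) * (t * q t) + c^2 * t := by
    intro t ht; ring
  have h0 : 0 ≤ ∫ t in Ioc r R, t * (q t - c)^2 := by
    apply setIntegral_nonneg measurableSet_Ioc
    intro t ht
    have : 0 < t := lt_trans hr ht.1
    positivity
  have heq : (∫ t in Ioc r R, t * (q t - c)^2)
      = (∫ t in Ioc r R, t * q t ^2) - (2*c) * B + c^2 * A := by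
    rw [setIntegral_congr_fun measurableSet_Ioc expand]
    rw [integral_add, integral_sub]
    · rw [integral_const_mul, integral_const_mul, hA]
    · exact hq2
    · exact hq1.const_mul _
    · exact hq2.sub (hq1.const_mul _)
    · exact hw.const_mul _
  rw [heq] at h0
  have hkey : B^2/A ≤ ∫ t in Ioc r R, t * q t ^2 := by
    have : (2*c)*B - c^2*A = B^2/A := by
      rw [hc]; field_simp; ring
    linarith [h0, this]
  have hAle : A ≤ R^2/2 := by simp only [hAdef]; nlinarith
  have hI2 : 0 ≤ ∫ t in Ioc r R, t * q t ^2 := by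
    apply setIntegral_nonneg measurableSet_Ioc
    intro t ht
    have : 0 < t := lt_trans hr ht.1
    positivity
  calc B^2 = A * (B^2/A) := by field_simp
    _ ≤ (R^2/2) * (B^2/A) := by
        apply mul_le_mul_of_nonneg_right hAle
        positivity
    _ ≤ (R^2/2) * ∫ t in Ioc r R, t * q t ^2 := by
        apply mul_le_mul_of_nonneg_left hkey
        positivity

lemma g_hasDeriv (hu : ContDiff ℝ 1 u) (ω : EuclideanSpace ℝ (Fin 2)) (t : ℝ) :
    HasDerivAt (fun s : ℝ => ⟪u (s • ω), ω⟫)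
      ⟪fderiv ℝ u (t • ω) ω, ω⟫ t := by
  have hc : HasDerivAt (fun s : ℝ => s • ω) ω t := by
    simpa using (hasDerivAt_id t).smul_const ω
  have hcomp : HasDerivAt (fun s : ℝ => u (s • ω)) (fderiv ℝ u (t • ω) ω) t :=
    (hu.differentiable one_ne_zero (t • ω)).hasFDerivAt.comp_hasDerivAt t hc
  simpa using HasDerivAt.inner ℝ hcomp (hasDerivAt_const t ω)

lemma tangential (hu : ContDiff ℝ 1 u)
    (hsym : ∀ x : EuclideanSpace ℝ (Fin 2), x ≠ 0 → u x = (ubar ‖x‖ / ‖x‖) • x)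
    (ω τ : EuclideanSpace ℝ (Fin 2)) (hω : ‖ω‖ = 1) (hτ : ‖τ‖ = 1)
    (hωτ : ⟪ω, τ⟫ = 0) {t : ℝ} (ht : 0 < t) :
    t * ⟪fderiv ℝ u (t • ω) τ, τ⟫ = ⟪u (t • ω), ω⟫ := by
  set y : EuclideanSpace ℝ (Fin 2) := t • ω with hy
  have hττ : ⟪τ, τ⟫ = 1 := by rw [real_inner_self_eq_norm_sq, hτ]; norm_num
  have hωω : ⟪ω, ω⟫ = 1 := by rw [real_inner_self_eq_norm_sq, hω]; norm_num
  have hτω : ⟪τ, ω⟫ = 0 := by rw [real_inner_comm]; exact hωτ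
  have hyn : ‖y‖ = t := by rw [hy, norm_smul, hω, Real.norm_eq_abs, abs_of_pos ht, mul_one]
  have hy0 : y ≠ 0 := by rw [← norm_ne_zero_iff, hyn]; exact ne_of_gt ht
  have hψ : HasDerivAt (fun s : ℝ => ⟪u (y + s • τ), τ⟫) ⟪fderiv ℝ u y τ, τ⟫ 0 := by
    have hc : HasDerivAt (fun s : ℝ => y + s • τ) τ 0 := by
      simpa using ((hasDerivAt_id (0:ℝ)).smul_const τ).const_add y
    have hcomp : HasDerivAt (fun s : ℝ => u (y + s • τ)) (fderiv ℝ u (y + (0:ℝ) • τ) τ) 0 :=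
      (hu.differentiable one_ne_zero _).hasFDerivAt.comp_hasDerivAt 0 hc
    rw [zero_smul, add_zero] at hcomp
    simpa using HasDerivAt.inner ℝ hcomp (hasDerivAt_const 0 τ)
  have hnorm2 : ∀ s : ℝ, ‖y + s • τ‖^2 = t^2 + s^2 := by
    intro s
    rw [← real_inner_self_eq_norm_sq, hy]
    simp only [inner_add_left, inner_add_right, real_inner_smul_left, real_inner_smul_right,
      hωτ, hτω, hωω, hττ]
    ring
  have hne : ∀ s : ℝ, y + s • τ ≠ 0 := by
    intro s h
    have h2 := hnorm2 s
    rw [h, norm_zero] at h2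
    nlinarith
  have hψφ : ∀ s : ℝ, ⟪u (y + s • τ), τ⟫ = (⟪u (y + s • τ), y + s • τ⟫ / (t^2 + s^2)) * s := by
    intro s
    rw [hsym _ (hne s)]
    simp only [real_inner_smul_left]
    have h1 : ⟪y + s • τ, τ⟫ = s := by
      rw [hy]
      simp only [inner_add_left, real_inner_smul_left, hωτ, hττ]
      ring
    have h2 : ⟪y + s • τ, y + s • τ⟫ = t^2 + s^2 := by
      rw [real_inner_self_eq_norm_sq, hnorm2]
    rw [h1, h2]
    have hts : (0:ℝ) < t^2 + s^2 := by positivity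
    rw [mul_div_assoc, div_self hts.ne', mul_one]
  have hφc : Tendsto (fun s : ℝ => ⟪u (y + s • τ), y + s • τ⟫ / (t^2 + s^2)) (𝓝[≠] 0)
      (𝓝 (⟪u y, y⟫ / t^2)) := by
    have hcont : ContinuousAt (fun s : ℝ => ⟪u (y + s • τ), y + s • τ⟫ / (t^2 + s^2)) 0 := by
      apply ContinuousAt.div
      · exact ContinuousAt.inner (hu.continuous.comp (by fun_prop)).continuousAt (by fun_prop)
      · fun_prop
      · positivity
    have h := hcont.tendsto.mono_left (nhdsWithin_le_nhds (s := {(0:ℝ)}ᶜ))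
    simpa using h
  have hslope := hasDerivAt_iff_tendsto_slope.mp hψ
  have heq : (slope (fun s : ℝ => ⟪u (y + s • τ), τ⟫) 0) =ᶠ[𝓝[≠] (0:ℝ)]
      fun s => ⟪u (y + s • τ), y + s • τ⟫ / (t^2 + s^2) := by
    filter_upwards [self_mem_nhdsWithin] with s hs
    have hs0 : s ≠ 0 := hs
    rw [slope_def_field]
    rw [hψφ s, hψφ 0]
    field_simp
    ring
  have huniq : ⟪fderiv ℝ u y τ, τ⟫ = ⟪u y, y⟫ / t^2 :=
    tendsto_nhds_unique (hslope.congr' heq) hφc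
  rw [huniq]
  have : ⟪u y, y⟫ = t * ⟪u y, ω⟫ := by
    nth_rewrite 2 [hy]
    rw [real_inner_smul_right]
  rw [this]
  field_simp

lemma inner_E2 (v w : EuclideanSpace ℝ (Fin 2)) : ⟪v, w⟫ = v 0 * w 0 + v 1 * w 1 := by
  simp [PiLp.inner_apply, Fin.sum_univ_two, RCLike.inner_apply, conj_trivial]
  ring

lemma frob_ineq (A : EuclideanSpace ℝ (Fin 2) →L[ℝ] EuclideanSpace ℝ (Fin 2))
    (ω : EuclideanSpace ℝ (Fin 2)) (hω : ω 0 ^ 2 + ω 1 ^ 2 = 1) :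
    ⟪A ω, ω⟫ ^ 2 + ⟪A (rotL 0 1 ω), rotL 0 1 ω⟫ ^ 2 ≤
      ∑ i : Fin 2, ∑ j : Fin 2, (A (EuclideanSpace.single j 1) i) ^ 2 := by
  set p := ω 0
  set q := ω 1
  set m : Fin 2 → Fin 2 → ℝ := fun i j => A (EuclideanSpace.single j 1) i with hm
  have hτ0 : rotL 0 1 ω 0 = -q := by rw [rotL_apply0]; ring
  have hτ1 : rotL 0 1 ω 1 = p := by rw [rotL_apply1]; ring
  have hAω : ∀ i, A ω i = p * m i 0 + q * m i 1 := fun i => clm_comp_eval A ω i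
  have hAτ : ∀ i, A (rotL 0 1 ω) i = -q * m i 0 + p * m i 1 := by
    intro i
    rw [clm_comp_eval A _ i, hτ0, hτ1]
  rw [inner_E2, inner_E2, hAω 0, hAω 1, hAτ 0, hAτ 1, hτ0, hτ1]
  simp only [Fin.sum_univ_two]
  have hid : (p * (p * m 0 0 + q * m 0 1) + q * (p * m 1 0 + q * m 1 1)) ^ 2
      + (-q * (p * m 0 0 + q * m 0 1) + p * (p * m 1 0 + q * m 1 1)) ^ 2
      + (p * (-q * m 0 0 + p * m 0 1) + q * (-q * m 1 0 + p * m 1 1)) ^ 2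
      + ((-q * m 0 0 + p * m 0 1) * -q + (-q * m 1 0 + p * m 1 1) * p) ^ 2
      = (m 0 0 ^ 2 + m 0 1 ^ 2 + m 1 0 ^ 2 + m 1 1 ^ 2) := by
    linear_combination (m 0 0 ^ 2 + m 0 1 ^ 2 + m 1 0 ^ 2 + m 1 1 ^ 2) * (p ^ 2 + q ^ 2 + 1) * hω
  nlinarith [sq_nonneg (-q * (p * m 0 0 + q * m 0 1) + p * (p * m 1 0 + q * m 1 1)),
    sq_nonneg (p * (-q * m 0 0 + p * m 0 1) + q * (-q * m 1 0 + p * m 1 1))]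


/-- Weighted sup bound by the Dirichlet integral for compactly supported radial vector fields
in the plane: `sup_x (u(x)·x)² ≤ (R²/(2π)) ∫_{B_R} ‖Du‖²`, the Frobenius norm squared
`‖Du‖²` being the sum of the squares of all entries of the Jacobian matrix. -/
theorem weighted_sup_bound_radial_2d
    (R : ℝ) (hR : 0 < R)
    (u : EuclideanSpace ℝ (Fin 2) → EuclideanSpace ℝ (Fin 2))
    (hu : ContDiff ℝ 1 u)
    (ubar : ℝ → ℝ)
    (hsym : ∀ x : EuclideanSpace ℝ (Fin 2), x ≠ 0 → u x = (ubar ‖x‖ / ‖x‖) • x)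
    (hsupp : ∀ x : EuclideanSpace ℝ (Fin 2), R ≤ ‖x‖ → u x = 0) :
    ∀ x : EuclideanSpace ℝ (Fin 2),
      ⟪u x, x⟫ ^ 2 ≤ R ^ 2 / (2 * Real.pi) *
        ∫ y in Metric.ball (0 : EuclideanSpace ℝ (Fin 2)) R,
          ∑ i : Fin 2, ∑ j : Fin 2, (fderiv ℝ u y (EuclideanSpace.single j 1) i) ^ 2 := by
  intro x
  set f : ℝ → ℝ := fun t => ∑ i : Fin 2, ∑ j : Fin 2,
      (fderiv ℝ u (t • EuclideanSpace.single 0 1) (EuclideanSpace.single j 1) i) ^ 2 with hf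
  set J : ℝ := ∫ t in Ioc (0:ℝ) R, t * f t with hJ
  have hfnn : ∀ t : ℝ, 0 ≤ f t := by
    intro t
    apply Finset.sum_nonneg; intro i _
    apply Finset.sum_nonneg; intro j _
    positivity
  have hfc : Continuous f := by
    apply continuous_finset_sum; intro i _
    apply continuous_finset_sum; intro j _
    have h1 : Continuous fun t : ℝ => fderiv ℝ u (t • EuclideanSpace.single 0 1) :=
      (hu.continuous_fderiv one_ne_zero).comp (by fun_prop)
    exact ((PiLp.continuous_apply 2 _ i).comp (h1.clm_apply continuous_const)).pow 2
  have hJnn : 0 ≤ J := by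
    apply setIntegral_nonneg measurableSet_Ioc
    intro t ht
    exact mul_nonneg (le_of_lt ht.1) (hfnn t)
  have hIeq := ball_integral_eq hR hu hsym hsupp
  rw [hIeq]
  have hπ : Real.pi ≠ 0 := Real.pi_ne_zero
  have hrhs : R ^ 2 / (2 * Real.pi) * ((2 * Real.pi) * J) = R ^ 2 * J := by
    field_simp
  rw [← hJ, hrhs]
  have hRJ : 0 ≤ R ^ 2 * J := mul_nonneg (sq_nonneg R) hJnn
  rcases eq_or_ne x 0 with rfl | hx0
  · rw [inner_zero_right]
    simpa using hRJ
  rcases le_or_gt R ‖x‖ with hxR | hxR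
  · rw [hsupp x hxR, inner_zero_left]
    simpa using hRJ
  -- main case
  set r : ℝ := ‖x‖ with hr
  have hrpos : 0 < r := norm_pos_iff.mpr hx0
  set ω : EuclideanSpace ℝ (Fin 2) := r⁻¹ • x with hω
  have hωn : ‖ω‖ = 1 := by
    rw [hω, norm_smul, Real.norm_eq_abs, abs_of_pos (inv_pos.mpr hrpos), ← hr,
      inv_mul_cancel₀ (ne_of_gt hrpos)]
  have hxω : r • ω = x := by rw [hω, smul_inv_smul₀ (ne_of_gt hrpos)]
  have hωcomp : ω 0 ^ 2 + ω 1 ^ 2 = 1 := by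
    have h2 : ‖ω‖^2 = ω 0 ^2 + ω 1 ^2 := by
      rw [EuclideanSpace.norm_eq, Real.sq_sqrt (by positivity)]
      simp [Fin.sum_univ_two, sq_abs]
    rw [← h2, hωn]; norm_num
  set τ : EuclideanSpace ℝ (Fin 2) := rotL 0 1 ω with hτ
  have hτn : ‖τ‖ = 1 := by
    rw [hτ, rotL_norm 0 1 (by norm_num) ω, hωn]
  have hωτ : ⟪ω, τ⟫ = 0 := by
    rw [hτ, inner_E2, rotL_apply0, rotL_apply1]; ring
  set g : ℝ → ℝ := fun t => ⟪u (t • ω), ω⟫ with hg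
  set gd : ℝ → ℝ := fun t => ⟪fderiv ℝ u (t • ω) ω, ω⟫ with hgd
  have hgderiv : ∀ t : ℝ, HasDerivAt g (gd t) t := fun t => g_hasDeriv hu ω t
  have hgdc : Continuous gd := by
    have h1 : Continuous fun t : ℝ => fderiv ℝ u (t • ω) :=
      (hu.continuous_fderiv one_ne_zero).comp (by fun_prop)
    exact (h1.clm_apply continuous_const).inner continuous_const
  have hgc : Continuous g := (hu.continuous.comp (by fun_prop)).inner continuous_const
  -- FTC
  have hhd : ∀ t : ℝ, HasDerivAt (fun s => s * g s) (g t + t * gd t) t := by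
    intro t
    have := (hasDerivAt_id t).mul (hgderiv t)
    exact this.congr_deriv (by simp)
  have hcont' : Continuous fun t : ℝ => g t + t * gd t :=
    hgc.add (continuous_id.mul hgdc)
  have hgR : g R = 0 := by
    rw [hg]
    have : ‖R • ω‖ = R := by
      rw [norm_smul, hωn, Real.norm_eq_abs, abs_of_pos hR, mul_one]
    simp only []
    rw [hsupp (R • ω) (le_of_eq this.symm), inner_zero_left]
  have hFTC : (∫ t in Set.Ioc r R, (g t + t * gd t)) = - (r * g r) := by
    have h1 : (∫ t in r..R, (g t + t * gd t)) = R * g R - r * g r := by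
      apply intervalIntegral.integral_eq_sub_of_hasDerivAt
      · intro t _; exact hhd t
      · exact hcont'.intervalIntegrable r R
    rw [← intervalIntegral.integral_of_le (le_of_lt hxR), h1, hgR]
    ring
  have hinner : ⟪u x, x⟫ = r * g r := by
    rw [hg]
    simp only []
    rw [hxω, ← hxω]
    rw [real_inner_smul_right]
  -- Cauchy-Schwarz setup
  set q : ℝ → ℝ := fun t => (g t + t * gd t) / t with hq
  have hqcont : ContinuousOn q (Icc r R) := by
    apply ContinuousOn.div (hcont'.continuousOn) continuousOn_id
    intro t ht
    exact ne_of_gt (lt_of_lt_of_le hrpos ht.1)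
  have hqeq : ∀ t ∈ Ioc r R, t * q t = g t + t * gd t := by
    intro t ht
    have htpos : 0 < t := lt_trans hrpos ht.1
    rw [hq]
    field_simp
  have hIcongr : (∫ t in Ioc r R, (g t + t * gd t)) = ∫ t in Ioc r R, t * q t := by
    refine (setIntegral_congr_fun measurableSet_Ioc ?_).symm
    exact hqeq
  have hCS := cs_key hrpos hxR q hqcont
  -- pointwise bound
  have hpoint : ∀ t ∈ Ioc r R, t * q t ^ 2 ≤ 2 * (t * f t) := by
    intro t ht
    have htpos : 0 < t := lt_trans hrpos ht.1
    have htω : t • ω ≠ 0 := by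
      rw [← norm_ne_zero_iff, norm_smul, hωn, Real.norm_eq_abs, abs_of_pos htpos, mul_one]
      exact ne_of_gt htpos
    set A := fderiv ℝ u (t • ω) with hA
    have htan : t * ⟪A τ, τ⟫ = g t := by
      rw [hg]
      exact tangential hu hsym ω τ hωn hτn hωτ htpos
    have hgd' : gd t = ⟪A ω, ω⟫ := rfl
    have hfrob := frob_ineq A ω hωcomp
    rw [← hτ] at hfrob
    have hrad : (∑ i : Fin 2, ∑ j : Fin 2, (A (EuclideanSpace.single j 1) i) ^ 2) = f t := by
      rw [hA, hf]
      have := frob_radial hu hsym (t • ω) htω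
      rw [this]
      have : ‖t • ω‖ = t := by
        rw [norm_smul, hωn, Real.norm_eq_abs, abs_of_pos htpos, mul_one]
      rw [this]
    rw [hrad] at hfrob
    set α : ℝ := ⟪A τ, τ⟫ with hα
    set β : ℝ := ⟪A ω, ω⟫ with hβ
    have hqval : q t = α + β := by
      rw [hq]
      simp only []
      rw [← htan, hgd']
      field_simp
    rw [hqval]
    have h1 : (α + β)^2 ≤ 2 * (α^2 + β^2) := by nlinarith [sq_nonneg (α - β)]
    calc t * (α + β)^2 ≤ t * (2 * (α^2 + β^2)) := by
          exact mul_le_mul_of_nonneg_left h1 htpos.le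
      _ ≤ t * (2 * f t) := by
          apply mul_le_mul_of_nonneg_left _ htpos.le
          linarith [hfrob]
      _ = 2 * (t * f t) := by ring
  -- integral comparisons
  have hi1 : IntegrableOn (fun t => t * q t ^ 2) (Ioc r R) :=
    ((continuousOn_id.mul (hqcont.pow 2)).integrableOn_Icc).mono_set Ioc_subset_Icc_self
  have hi2 : IntegrableOn (fun t => 2 * (t * f t)) (Ioc r R) :=
    ((continuous_const.mul (continuous_id.mul hfc)).integrableOn_Ioc)
  have hi3 : IntegrableOn (fun t => 2 * (t * f t)) (Ioc 0 R) :=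
    ((continuous_const.mul (continuous_id.mul hfc)).integrableOn_Ioc)
  have hmono1 : (∫ t in Ioc r R, t * q t ^ 2) ≤ ∫ t in Ioc r R, 2 * (t * f t) :=
    setIntegral_mono_on hi1 hi2 measurableSet_Ioc hpoint
  have hmono2 : (∫ t in Ioc r R, 2 * (t * f t)) ≤ ∫ t in Ioc 0 R, 2 * (t * f t) := by
    apply setIntegral_mono_set hi3
    · filter_upwards [ae_restrict_mem measurableSet_Ioc] with t ht
      exact mul_nonneg (by norm_num) (mul_nonneg (le_of_lt ht.1) (hfnn t))
    · exact HasSubset.Subset.eventuallyLE (Ioc_subset_Ioc_left (le_of_lt hrpos))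
  have h2J : (∫ t in Ioc 0 R, 2 * (t * f t)) = 2 * J := by
    rw [hJ, ← integral_const_mul]
  calc ⟪u x, x⟫ ^ 2 = (∫ t in Ioc r R, t * q t) ^ 2 := by
        rw [hinner, ← neg_neg (r * g r), ← hFTC, hIcongr]
        ring
    _ ≤ (R^2/2) * ∫ t in Ioc r R, t * q t ^ 2 := hCS
    _ ≤ (R^2/2) * (2 * J) := by
        apply mul_le_mul_of_nonneg_left _ (by positivity)
        rw [← h2J]
        exact le_trans hmono1 hmono2
    _ = R ^ 2 * J := by ring
end

section
/- Invariance of the support (one-dimensional case): Let μ > 0, λ + 2μ > 0, a > 0, R > 0. Let ρ, u : [0,∞) × ℝ → ℝ be infinitely differentiable with ρ ≥ 0, satisfying ∂_t ρ + ∂_x(ρu) = 0 and ∂_t(ρu) + ∂_x(ρu²) + a ∂_x ρ = (λ+2μ) ∂²_x u on [0,∞) × ℝ, such that for every t ≥ 0 the functions ρ(t,·), u(t,·), ∂_x u(t,·), ∂²_x u(t,·) are square integrable on ℝ, ∂_x u is bounded on [0,T] × ℝ for every T > 0, and ρ(0,x) = 0 for all |x| ≥ R. Then for every t ≥ 0 and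 every x with |x| ≥ R one has ρ(t,x) = 0 and u(t,x) = 0. -/
open MeasureTheory Set

section ODE

variable {v : ℝ → ℝ → ℝ} {C : NNReal}

/-- Local forward existence with a step size depending only on the Lipschitz constant. -/
lemma local_sol (hcont : Continuous (Function.uncurry v))
    (hlip : ∀ t, LipschitzWith C (v t)) (t₁ x₁ : ℝ) :
    ∃ f : ℝ → ℝ, f t₁ = x₁ ∧ ∀ t ∈ Icc t₁ (t₁ + (2*(C:ℝ)+2)⁻¹),
      HasDerivWithinAt f (v t (f t)) (Icc t₁ (t₁ + (2*(C:ℝ)+2)⁻¹)) t := by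
  set h : ℝ := (2*(C:ℝ)+2)⁻¹ with hh
  have hC0 : (0:ℝ) ≤ C := C.coe_nonneg
  have hhpos : 0 < h := by positivity
  -- bound for ‖v t x₁‖ on the compact time interval
  obtain ⟨M₀, hM₀⟩ : ∃ M₀, ∀ t ∈ Icc t₁ (t₁ + h), ‖v t x₁‖ ≤ M₀ := by
    have hc : ContinuousOn (fun t => v t x₁) (Icc t₁ (t₁ + h)) :=
      (hcont.comp (continuous_id.prodMk continuous_const)).continuousOn
    exact (isCompact_Icc).exists_bound_of_continuousOn hc
  set M : ℝ := max M₀ 0 with hM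
  have hM0 : 0 ≤ M := le_max_right _ _
  have hMb : ∀ t ∈ Icc t₁ (t₁ + h), ‖v t x₁‖ ≤ M := fun t ht => (hM₀ t ht).trans (le_max_left _ _)
  set R₀ : ℝ := 2*h*(M+1) with hR₀
  set L : ℝ := M + C * R₀ with hL
  have hR₀0 : 0 ≤ R₀ := by positivity
  have hL0 : 0 ≤ L := by positivity
  have hpl : IsPicardLindelof v (tmin := t₁) (tmax := t₁ + h) ⟨t₁, le_rfl, by linarith⟩ x₁
      ⟨R₀, hR₀0⟩ 0 ⟨L, hL0⟩ C := by
    refine ⟨?_, ?_, ?_, ?_⟩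
    · intro t _; exact (hlip t).lipschitzOnWith
    · intro x _
      exact (hcont.comp (continuous_id.prodMk continuous_const)).continuousOn
    · intro t ht x hx
      have h1 : dist (v t x) (v t x₁) ≤ C * dist x x₁ := (hlip t).dist_le_mul x x₁
      have h2 : dist x x₁ ≤ R₀ := hx
      show ‖v t x‖ ≤ L
      have h3 : ‖v t x‖ ≤ ‖v t x₁‖ + dist (v t x) (v t x₁) := by
        rw [dist_eq_norm]
        calc ‖v t x‖ = ‖v t x₁ + (v t x - v t x₁)‖ := by ring_nf
          _ ≤ ‖v t x₁‖ + ‖v t x - v t x₁‖ := norm_add_le _ _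
      have := hMb t ht
      nlinarith [mul_le_mul_of_nonneg_left h2 hC0]
    · have hCh : 2 * (C:ℝ) * h ≤ 1 := by
        rw [hh]
        rw [mul_inv_le_iff₀ (by positivity)]
        linarith
      simp only [NNReal.coe_mk, NNReal.coe_zero, sub_zero, tsub_zero]
      show L * max (t₁ + h - t₁) (t₁ - t₁) ≤ R₀
      have : max (t₁ + h - t₁) (t₁ - t₁) = h := by
        rw [max_eq_left (by linarith)]; ring
      rw [this, hL, hR₀]
      have key : 2 * (C:ℝ) * h * (h * (M+1)) ≤ 1 * (h * (M+1)) :=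
        mul_le_mul_of_nonneg_right hCh (by positivity)
      nlinarith [mul_nonneg hM0 hhpos.le]
  obtain ⟨f, hf0, hf⟩ := hpl.exists_eq_forall_mem_Icc_hasDerivWithinAt₀
  exact ⟨f, hf0, hf⟩

/-- Gluing two solutions at a common time. -/
lemma glue_sol {a b c : ℝ} (hab : a ≤ b) (hbc : b ≤ c) {f g : ℝ → ℝ}
    (hf : ∀ t ∈ Icc a b, HasDerivWithinAt f (v t (f t)) (Icc a b) t)
    (hg : ∀ t ∈ Icc b c, HasDerivWithinAt g (v t (g t)) (Icc b c) t)
    (hfg : f b = g b) :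
    ∃ F : ℝ → ℝ, (∀ t ∈ Icc a b, F t = f t) ∧ (∀ t ∈ Icc b c, F t = g t) ∧
      ∀ t ∈ Icc a c, HasDerivWithinAt F (v t (F t)) (Icc a c) t := by
  classical
  set F : ℝ → ℝ := fun t => if t ≤ b then f t else g t with hF
  have hFf : ∀ t ∈ Icc a b, F t = f t := fun t ht => if_pos ht.2
  have hFg : ∀ t ∈ Icc b c, F t = g t := by
    intro t ht
    by_cases h : t ≤ b
    · have : t = b := le_antisymm h ht.1
      simp [hF, this, hfg]
    · exact if_neg h
  refine ⟨F, hFf, hFg, ?_⟩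
  intro t ht
  rw [← Icc_union_Icc_eq_Icc hab hbc]
  by_cases h1 : t ≤ b
  · have htab : t ∈ Icc a b := ⟨ht.1, h1⟩
    have piece1 : HasDerivWithinAt F (v t (F t)) (Icc a b) t := by
      have := (hf t htab).congr (fun y hy => hFf y hy) (hFf t htab)
      rwa [hFf t htab]
    have piece2 : HasDerivWithinAt F (v t (F t)) (Icc b c) t := by
      rcases eq_or_lt_of_le h1 with h2 | h2
      · have htbc : t ∈ Icc b c := ⟨h2.ge, h2 ▸ hbc⟩
        have := (hg t htbc).congr (fun y hy => hFg y hy) (hFg t htbc)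
        rwa [hFg t htbc]
      · have : t ∉ closure (Icc b c) := by
          rw [closure_Icc]
          intro hc'
          exact absurd hc'.1 (not_le.mpr h2)
        exact HasFDerivWithinAt.of_notMem_closure this
    exact piece1.union piece2
  · push_neg at h1
    have htbc : t ∈ Icc b c := ⟨h1.le, ht.2⟩
    have piece2 : HasDerivWithinAt F (v t (F t)) (Icc b c) t := by
      have := (hg t htbc).congr (fun y hy => hFg y hy) (hFg t htbc)
      rwa [hFg t htbc]
    have piece1 : HasDerivWithinAt F (v t (F t)) (Icc a b) t := by
      have : t ∉ closure (Icc a b) := by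
        rw [closure_Icc]
        intro hc'
        exact absurd hc'.2 (not_le.mpr h1)
      exact HasFDerivWithinAt.of_notMem_closure this
    exact piece1.union piece2

/-- Forward iterated existence. -/
lemma forward_sol (hcont : Continuous (Function.uncurry v))
    (hlip : ∀ t, LipschitzWith C (v t)) (t₀ x₀ : ℝ) (n : ℕ) :
    ∃ f : ℝ → ℝ, f t₀ = x₀ ∧ ∀ t ∈ Icc t₀ (t₀ + n * (2*(C:ℝ)+2)⁻¹),
      HasDerivWithinAt f (v t (f t)) (Icc t₀ (t₀ + n * (2*(C:ℝ)+2)⁻¹)) t := by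
  set h : ℝ := (2*(C:ℝ)+2)⁻¹ with hh
  have hhpos : 0 < h := by positivity
  induction n with
  | zero =>
    obtain ⟨f, hf0, hf⟩ := local_sol hcont hlip t₀ x₀
    refine ⟨f, hf0, ?_⟩
    intro t ht
    simp only [Nat.cast_zero, zero_mul, add_zero] at ht ⊢
    have hsub : Icc t₀ t₀ ⊆ Icc t₀ (t₀ + h) := Icc_subset_Icc le_rfl (by linarith)
    exact (hf t (hsub ht)).mono hsub
  | succ n ih =>
    obtain ⟨f, hf0, hf⟩ := ih
    obtain ⟨g, hg0, hg⟩ := local_sol hcont hlip (t₀ + n * h) (f (t₀ + n * h))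
    have hnh : (0:ℝ) ≤ n * h := by positivity
    have hab : t₀ ≤ t₀ + n * h := by linarith
    have hbc : t₀ + n * h ≤ t₀ + n * h + h := by linarith
    obtain ⟨F, hF1, hF2, hF⟩ := glue_sol hab hbc hf hg hg0.symm
    refine ⟨F, ?_, ?_⟩
    · rw [hF1 t₀ ⟨le_rfl, hab⟩, hf0]
    · have : t₀ + (n+1 : ℕ) * h = t₀ + n * h + h := by push_cast; ring
      rw [this]
      exact hF

lemma lipschitz_neg' {f : ℝ → ℝ} (hf : LipschitzWith C f) :
    LipschitzWith C (fun x => -(f x)) :=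
  LipschitzWith.of_dist_le_mul fun x y => by
    rw [dist_neg_neg]; exact hf.dist_le_mul x y

/-- Backward iterated existence. -/
lemma backward_sol (hcont : Continuous (Function.uncurry v))
    (hlip : ∀ t, LipschitzWith C (v t)) (t₀ x₀ : ℝ) (n : ℕ) :
    ∃ f : ℝ → ℝ, f t₀ = x₀ ∧ ∀ t ∈ Icc (t₀ - n * (2*(C:ℝ)+2)⁻¹) t₀,
      HasDerivWithinAt f (v t (f t)) (Icc (t₀ - n * (2*(C:ℝ)+2)⁻¹) t₀) t := by
  set h : ℝ := (2*(C:ℝ)+2)⁻¹ with hh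
  set w : ℝ → ℝ → ℝ := fun s x => -(v (2*t₀ - s) x) with hw
  have hwcont : Continuous (Function.uncurry w) := by
    have : Continuous fun p : ℝ × ℝ => v (2*t₀ - p.1) p.2 :=
      hcont.comp ((continuous_const.sub continuous_fst).prodMk continuous_snd)
    exact this.neg
  have hwlip : ∀ s, LipschitzWith C (w s) := fun s => lipschitz_neg' (hlip _)
  obtain ⟨g, hg0, hg⟩ := forward_sol hwcont hwlip t₀ x₀ n
  refine ⟨fun t => g (2*t₀ - t), by show g (2*t₀ - t₀) = x₀; rw [show 2*t₀ - t₀ = t₀ by ring, hg0], ?_⟩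
  intro t ht
  have hs : 2*t₀ - t ∈ Icc t₀ (t₀ + n * h) := by
    constructor <;> [linarith [ht.2]; linarith [ht.1]]
  have hσ : HasDerivWithinAt (fun t => 2*t₀ - t) (-1) (Icc (t₀ - n * h) t₀) t := by
    simpa using ((hasDerivAt_id t).const_sub (2*t₀)).hasDerivWithinAt
  have hmt : MapsTo (fun t => 2*t₀ - t) (Icc (t₀ - n * h) t₀) (Icc t₀ (t₀ + n * h)) := by
    intro s hs'
    simp only [mem_Icc] at hs' ⊢
    constructor <;> linarith [hs'.1, hs'.2]
  have := (hg _ hs).comp t hσ hmt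
  simp only [Function.comp_def] at this
  refine this.congr_deriv ?_
  rw [hw]
  simp only []
  have h2 : 2*t₀ - (2*t₀ - t) = t := by ring
  rw [h2]
  ring

/-- Global existence on a compact interval for a globally Lipschitz field. -/
lemma global_sol (hcont : Continuous (Function.uncurry v))
    (hlip : ∀ t, LipschitzWith C (v t)) {a b t₀ : ℝ} (x₀ : ℝ)
    (ha : a ≤ t₀) (hb : t₀ ≤ b) :
    ∃ f : ℝ → ℝ, f t₀ = x₀ ∧ ∀ t ∈ Icc a b,
      HasDerivWithinAt f (v t (f t)) (Icc a b) t := by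
  set h : ℝ := (2*(C:ℝ)+2)⁻¹ with hh
  have hhpos : 0 < h := by positivity
  obtain ⟨n, hn⟩ := exists_nat_ge (max (b - t₀) (t₀ - a) / h)
  have hnh : max (b - t₀) (t₀ - a) ≤ n * h := by
    rw [div_le_iff₀ hhpos] at hn
    linarith
  have h1 : t₀ - n * h ≤ a := by
    have := le_max_right (b - t₀) (t₀ - a)
    linarith
  have h2 : b ≤ t₀ + n * h := by
    have := le_max_left (b - t₀) (t₀ - a)
    linarith
  obtain ⟨fb, hfb0, hfb⟩ := backward_sol hcont hlip t₀ x₀ n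
  obtain ⟨ff, hff0, hff⟩ := forward_sol hcont hlip t₀ x₀ n
  have hnh0 : (0:ℝ) ≤ n * h := by positivity
  obtain ⟨F, hFb, _, hF⟩ := glue_sol (by linarith : t₀ - (n:ℝ)*h ≤ t₀) (by linarith : t₀ ≤ t₀ + (n:ℝ)*h)
      hfb hff (by rw [hfb0, hff0])
  have hsub : Icc a b ⊆ Icc (t₀ - n*h) (t₀ + n*h) := Icc_subset_Icc h1 (by linarith)
  refine ⟨F, ?_, fun t ht => (hF t (hsub ht)).mono hsub⟩
  rw [hFb t₀ ⟨by linarith, le_rfl⟩, hfb0]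

end ODE


section Helpers

/-- Partial derivative in the first variable as a curve composition. -/
lemma hasDerivAt_slice_t {F : ℝ → ℝ → ℝ} (hF : ContDiff ℝ (⊤ : ℕ∞) (Function.uncurry F))
    (t x : ℝ) :
    HasDerivAt (fun s => F s x) ((fderiv ℝ (Function.uncurry F) (t, x)) (1, 0)) t := by
  have hd : HasFDerivAt (Function.uncurry F) (fderiv ℝ (Function.uncurry F) (t, x)) (t, x) :=
    (hF.differentiable (by simp) (t, x)).hasFDerivAt
  have hc : HasDerivAt (fun s : ℝ => (s, x)) ((1 : ℝ), (0 : ℝ)) t :=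
    (hasDerivAt_id t).prodMk (hasDerivAt_const t x)
  exact hd.comp_hasDerivAt t hc

lemma hasDerivAt_slice_x {F : ℝ → ℝ → ℝ} (hF : ContDiff ℝ (⊤ : ℕ∞) (Function.uncurry F))
    (t x : ℝ) :
    HasDerivAt (fun y => F t y) ((fderiv ℝ (Function.uncurry F) (t, x)) (0, 1)) x := by
  have hd : HasFDerivAt (Function.uncurry F) (fderiv ℝ (Function.uncurry F) (t, x)) (t, x) :=
    (hF.differentiable (by simp) (t, x)).hasFDerivAt
  have hc : HasDerivAt (fun y : ℝ => (t, y)) ((0 : ℝ), (1 : ℝ)) x :=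
    (hasDerivAt_const x t).prodMk (hasDerivAt_id x)
  exact hd.comp_hasDerivAt x hc

lemma fderiv_split {F : ℝ → ℝ → ℝ} (hF : ContDiff ℝ (⊤ : ℕ∞) (Function.uncurry F))
    (t x w : ℝ) :
    (fderiv ℝ (Function.uncurry F) (t, x)) (1, w)
      = deriv (fun s => F s x) t + w * deriv (fun y => F t y) x := by
  have h1 := (hasDerivAt_slice_t hF t x).deriv
  have h2 := (hasDerivAt_slice_x hF t x).deriv
  rw [h1, h2]
  have : ((1 : ℝ), w) = ((1 : ℝ), (0 : ℝ)) + w • ((0 : ℝ), (1 : ℝ)) := by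
    simp [Prod.ext_iff]
  rw [this, (fderiv ℝ (Function.uncurry F) (t, x)).map_add,
    (fderiv ℝ (Function.uncurry F) (t, x)).map_smul]
  simp [smul_eq_mul]

/-- A function vanishing on `Ioi c` and continuous vanishes at `c`. -/
lemma right_limit_zero {f : ℝ → ℝ} (hf : Continuous f) {c : ℝ}
    (h : ∀ y, c < y → f y = 0) : f c = 0 := by
  have h1 : Filter.Tendsto f (nhdsWithin c (Ioi c)) (nhds (f c)) :=
    (hf.continuousAt).continuousWithinAt
  have h2 : Filter.Tendsto f (nhdsWithin c (Ioi c)) (nhds 0) := by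
    apply Filter.Tendsto.congr' _ tendsto_const_nhds
    filter_upwards [self_mem_nhdsWithin] with y hy
    exact (h y hy).symm
  exact tendsto_nhds_unique h1 h2

/-- A function with zero derivative on `Ioi c` is constant there. -/
lemma const_of_deriv_zero_Ioi {f : ℝ → ℝ} {c : ℝ}
    (hd : ∀ y, c < y → HasDerivAt f 0 y) :
    ∀ y, c < y → f y = f (c + 1) := by
  have key : ∀ y₁ y₂ : ℝ, c < y₁ → y₁ ≤ y₂ → c < y₂ → f y₂ = f y₁ := by
    intro y₁ y₂ hy₁ h12 _
    have hcont : ContinuousOn f (Icc y₁ y₂) := fun z hz =>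
      (hd z (lt_of_lt_of_le hy₁ hz.1)).continuousAt.continuousWithinAt
    have hderiv : ∀ z ∈ Ico y₁ y₂, HasDerivWithinAt f 0 (Ici z) z := fun z hz =>
      (hd z (lt_of_lt_of_le hy₁ hz.1)).hasDerivWithinAt
    exact constant_of_has_deriv_right_zero hcont hderiv y₂ ⟨h12, le_rfl⟩
  intro y hy
  rcases le_total y (c + 1) with h | h
  · exact (key y (c + 1) hy h (by linarith)).symm
  · exact key (c + 1) y (by linarith) h hy

/-- An affine function that is square-integrable on `ℝ` vanishes on `Ioi c`. -/
lemma affine_L2_zero {f : ℝ → ℝ} {c m k : ℝ}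
    (hint : Integrable (fun x => (f x) ^ 2))
    (haff : ∀ y, c < y → f y = m * y + k) :
    ∀ y, c < y → f y = 0 := by
  have main : ∀ (x₂ ε : ℝ), 0 < ε → (∀ y, x₂ < y → ε ≤ (f y) ^ 2) → False := by
    intro x₂ ε hε hbig
    have hrestr : Integrable (fun x => (f x) ^ 2) (volume.restrict (Ioi x₂)) :=
      hint.restrict
    have hm := hrestr.measure_ge_lt_top hε
    have hsub : Ioi x₂ ⊆ {x | ε ≤ (f x) ^ 2} := fun y hy => hbig y hy
    have : (volume.restrict (Ioi x₂)) {x | ε ≤ (f x) ^ 2}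
        ≥ (volume.restrict (Ioi x₂)) (Ioi x₂) := measure_mono hsub
    rw [Measure.restrict_apply_self] at this
    rw [Real.volume_Ioi] at this
    exact absurd (lt_of_le_of_lt this hm) (by simp)
  have hm0 : m = 0 := by
    by_contra hm
    have hmabs : 0 < |m| := abs_pos.mpr hm
    refine main (max c ((1 + |k|) / |m|)) 1 one_pos ?_
    intro y hy
    have hyc : c < y := lt_of_le_of_lt (le_max_left _ _) hy
    have hyq : (1 + |k|) / |m| < y := lt_of_le_of_lt (le_max_right _ _) hy
    have hy1 : 1 + |k| ≤ |m| * y := by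
      rw [div_lt_iff₀ hmabs] at hyq
      linarith
    have habs : 1 ≤ |f y| := by
      rw [haff y hyc]
      have h1 : |m * y| - |k| ≤ |m * y + k| := by
        have := abs_add_le (m * y + k) (-k)
        simp only [add_neg_cancel_right] at this
        rw [abs_neg] at this
        linarith
      have h2 : |m * y| = |m| * y := by
        rw [abs_mul]
        congr 1
        rw [abs_of_pos]
        have : 0 < (1 + |k|) / |m| := by positivity
        linarith
      linarith
    calc (1:ℝ) = 1 ^ 2 := by norm_num
      _ ≤ |f y| ^ 2 := by nlinarith [abs_nonneg (f y)]
      _ = f y ^ 2 := sq_abs _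
  have hk0 : k = 0 := by
    by_contra hk
    have hkabs : 0 < |k| := abs_pos.mpr hk
    refine main c (k ^ 2) (by positivity) ?_
    intro y hy
    rw [haff y hy, hm0, zero_mul, zero_add]
  intro y hy
  rw [haff y hy, hm0, hk0, zero_mul, zero_add]

/-- In a right vacuum region, the velocity vanishes. -/
lemma vacuum_u_zero {lam μ a : ℝ} (hlam : 0 < lam + 2 * μ)
    {ρ u : ℝ → ℝ → ℝ}
    (hρ_smooth : ContDiff ℝ (⊤ : ℕ∞) (Function.uncurry ρ))
    (hu_smooth : ContDiff ℝ (⊤ : ℕ∞) (Function.uncurry u))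
    {t : ℝ} (ht : 0 ≤ t)
    (hmass : ∀ x, deriv (fun s => ρ s x) t + deriv (fun y => ρ t y * u t y) x = 0)
    (hmom : ∀ x, deriv (fun s => ρ s x * u s x) t + deriv (fun y => ρ t y * u t y ^ 2) x
        + a * deriv (fun y => ρ t y) x
        = (lam + 2 * μ) * deriv (deriv (fun y => u t y)) x)
    (huL2 : Integrable (fun x => (u t x) ^ 2))
    {c : ℝ} (hvac : ∀ y, c ≤ y → ρ t y = 0) :
    ∀ y, c ≤ y → u t y = 0 := by
  have hut : ContDiff ℝ (⊤ : ℕ∞) (fun y => u t y) :=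
    hu_smooth.comp (contDiff_const.prodMk contDiff_id)
  have hut' : ContDiff ℝ (⊤ : ℕ∞) (deriv (fun y => u t y)) :=
    (contDiff_infty_iff_deriv.mp (hut.of_le (by simp))).2
  -- second derivative vanishes on `Ioi c`
  have huxx : ∀ y, c < y → deriv (deriv (fun y => u t y)) y = 0 := by
    intro y hy
    have hento : ∀ᶠ z in nhds y, z ∈ Ioi c := (isOpen_Ioi).mem_nhds hy
    have hev : ∀ᶠ z in nhds y, ρ t z = 0 := by
      filter_upwards [hento] with z hz
      exact hvac z (le_of_lt hz)
    have dρx : deriv (fun y' => ρ t y') y = 0 := by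
      have : (fun y' => ρ t y') =ᶠ[nhds y] (fun _ => (0:ℝ)) := by
        filter_upwards [hev] with z hz using hz
      rw [this.deriv_eq, deriv_const]
    have dρu : deriv (fun y' => ρ t y' * u t y') y = 0 := by
      have : (fun y' => ρ t y' * u t y') =ᶠ[nhds y] (fun _ => (0:ℝ)) := by
        filter_upwards [hev] with z hz
        rw [hz, zero_mul]
      rw [this.deriv_eq, deriv_const]
    have dρu2 : deriv (fun y' => ρ t y' * u t y' ^ 2) y = 0 := by
      have : (fun y' => ρ t y' * u t y' ^ 2) =ᶠ[nhds y] (fun _ => (0:ℝ)) := by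
        filter_upwards [hev] with z hz
        rw [hz, zero_mul]
      rw [this.deriv_eq, deriv_const]
    have dtρ : deriv (fun s => ρ s y) t = 0 := by
      have := hmass y
      rw [dρu] at this
      linarith
    have dtρu : deriv (fun s => ρ s y * u s y) t = 0 := by
      have h1 : HasDerivAt (fun s => ρ s y)
          ((fderiv ℝ (Function.uncurry ρ) (t, y)) (1, 0)) t :=
        hasDerivAt_slice_t hρ_smooth t y
      have h2 : HasDerivAt (fun s => u s y)
          ((fderiv ℝ (Function.uncurry u) (t, y)) (1, 0)) t :=
        hasDerivAt_slice_t hu_smooth t y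
      have h3 : deriv (fun s => ρ s y * u s y) t = _ := (h1.mul h2).deriv
      rw [h3, ← h1.deriv, dtρ, hvac y (le_of_lt hy), zero_mul, zero_mul, add_zero]
    have hmy := hmom y
    rw [dtρu, dρu2, dρx, mul_zero] at hmy
    have : (lam + 2*μ) * deriv (deriv (fun y => u t y)) y = 0 := by linarith
    exact (mul_eq_zero.mp this).resolve_left (ne_of_gt hlam)
  -- the derivative of u is constant on `Ioi c`
  set m : ℝ := deriv (fun y => u t y) (c + 1) with hm
  have hconst : ∀ y, c < y → deriv (fun y => u t y) y = m := by
    intro y hy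
    exact const_of_deriv_zero_Ioi (fun z hz =>
      ((hut'.differentiable (by simp) z).hasDerivAt).congr_deriv (huxx z hz)) y hy
  -- u is affine on `Ioi c`
  have haff : ∀ y, c < y → u t y = m * y + (u t (c+1) - m * (c+1)) := by
    intro y hy
    have hF : ∀ z, c < z → HasDerivAt (fun z => u t z - m * z) 0 z := by
      intro z hz
      have h1 : HasDerivAt (fun z => u t z) (deriv (fun y => u t y) z) z :=
        (hut.differentiable (by simp) z).hasDerivAt
      have h2 : HasDerivAt (fun z : ℝ => m * z) m z := by
        simpa using (hasDerivAt_id z).const_mul m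
      have := h1.sub h2
      rwa [hconst z hz, sub_self] at this
    have := const_of_deriv_zero_Ioi hF y hy
    have h' : u t y - m * y = u t (c+1) - m * (c+1) := this
    linarith
  have hzero : ∀ y, c < y → u t y = 0 := affine_L2_zero huL2 haff
  intro y hy
  rcases eq_or_lt_of_le hy with h | h
  · subst h
    exact right_limit_zero hut.continuous hzero
  · exact hzero y h

end Helpers

section Main

lemma hdwa_Ici {f : ℝ → ℝ} {d T t : ℝ} (h : HasDerivWithinAt f d (Icc 0 T) t)
    (ht0 : 0 ≤ t) (htT : t < T) : HasDerivWithinAt f d (Ici t) t :=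
  h.mono_of_mem_nhdsWithin (mem_nhdsWithin.mpr
    ⟨Iio T, isOpen_Iio, htT, fun z hz => ⟨le_trans ht0 hz.2, le_of_lt hz.1⟩⟩)

lemma right_side
    (μ lam a R : ℝ) (hlam : 0 < lam + 2 * μ) (hR : 0 < R)
    (ρ u : ℝ → ℝ → ℝ)
    (hρ_smooth : ContDiff ℝ (⊤ : ℕ∞) (Function.uncurry ρ))
    (hu_smooth : ContDiff ℝ (⊤ : ℕ∞) (Function.uncurry u))
    (hmass : ∀ t x, 0 ≤ t →
      deriv (fun s => ρ s x) t + deriv (fun y => ρ t y * u t y) x = 0)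
    (hmom : ∀ t x, 0 ≤ t →
      deriv (fun s => ρ s x * u s x) t + deriv (fun y => ρ t y * u t y ^ 2) x
        + a * deriv (fun y => ρ t y) x
        = (lam + 2 * μ) * deriv (deriv (fun y => u t y)) x)
    (hu_L2 : ∀ t, 0 ≤ t → Integrable (fun x => (u t x) ^ 2))
    (hux_bdd : ∀ T, 0 < T → ∃ C, ∀ t x, 0 ≤ t → t ≤ T → |deriv (fun y => u t y) x| ≤ C)
    (hsupp : ∀ x, R ≤ |x| → ρ 0 x = 0) :
    ∀ t, 0 ≤ t → ∀ x : ℝ, R ≤ x → ρ t x = 0 ∧ u t x = 0 := by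
  intro t₁ ht₁ x₁ hx₁
  set T : ℝ := t₁ + 1 with hT
  have hT0 : 0 < T := by linarith
  obtain ⟨C₀, hC₀⟩ := hux_bdd T hT0
  have hC₀0 : 0 ≤ C₀ := le_trans (abs_nonneg _) (hC₀ 0 0 le_rfl hT0.le)
  set C : NNReal := C₀.toNNReal with hC
  have huslice : ∀ s : ℝ, ContDiff ℝ (⊤ : ℕ∞) (fun y => u s y) := fun s =>
    hu_smooth.comp (contDiff_const.prodMk contDiff_id)
  have hρslice : ∀ s : ℝ, ContDiff ℝ (⊤ : ℕ∞) (fun y => ρ s y) := fun s =>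
    hρ_smooth.comp (contDiff_const.prodMk contDiff_id)
  have hulip : ∀ s, 0 ≤ s → s ≤ T → LipschitzWith C (u s) := by
    intro s hs hsT
    apply lipschitzWith_of_nnnorm_deriv_le ((huslice s).differentiable (by simp))
    intro x
    rw [← NNReal.coe_le_coe, coe_nnnorm, Real.norm_eq_abs, hC, Real.coe_toNNReal _ hC₀0]
    exact hC₀ s x hs hsT
  set v : ℝ → ℝ → ℝ := fun s x => u (min (max s 0) T) x with hv
  have hclamp : ∀ s : ℝ, 0 ≤ min (max s 0) T ∧ min (max s 0) T ≤ T := fun s =>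
    ⟨le_min (le_max_right _ _) hT0.le, min_le_right _ _⟩
  have hvlip : ∀ s, LipschitzWith C (v s) := fun s => hulip _ (hclamp s).1 (hclamp s).2
  have hvcont : Continuous (Function.uncurry v) := by
    have h1 : Continuous (fun p : ℝ × ℝ => (min (max p.1 0) T, p.2)) :=
      ((continuous_fst.max continuous_const).min continuous_const).prodMk continuous_snd
    exact (hu_smooth.continuous).comp h1
  have hveq : ∀ s x, 0 ≤ s → s ≤ T → v s x = u s x := by
    intro s x h1 h2
    simp only [hv]
    rw [max_eq_left h1, min_eq_left h2]
  obtain ⟨b, hb0, hb⟩ := global_sol hvcont hvlip R (le_refl (0:ℝ)) hT0.le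
  have hbu : ∀ s ∈ Icc (0:ℝ) T, HasDerivWithinAt b (u s (b s)) (Icc 0 T) s := by
    intro s hs
    have := hb s hs
    rwa [hveq s (b s) hs.1 hs.2] at this
  have hbcont : ContinuousOn b (Icc 0 T) := fun s hs => (hb s hs).continuousWithinAt
  -- key vacuum propagation claim
  have key : ∀ s ∈ Icc (0:ℝ) T, ∀ y, b s < y → ρ s y = 0 := by
    intro s hs y hy
    obtain ⟨f, hfs, hf⟩ := global_sol hvcont hvlip (t₀ := s) y hs.1 hs.2
    have hfu : ∀ r ∈ Icc (0:ℝ) T, HasDerivWithinAt f (u r (f r)) (Icc 0 T) r := by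
      intro r hr
      have := hf r hr
      rwa [hveq r (f r) hr.1 hr.2] at this
    have hfcont : ContinuousOn f (Icc 0 T) := fun r hr => (hf r hr).continuousWithinAt
    -- no crossing
    have hcross : R < f 0 := by
      by_contra hle
      push_neg at hle
      have hIcc : Icc (0:ℝ) s ⊆ Icc 0 T := Icc_subset_Icc_right hs.2
      have hgc : ContinuousOn (fun r => f r - b r) (Icc 0 s) :=
        (hfcont.mono hIcc).sub (hbcont.mono hIcc)
      have h0 : (fun r => f r - b r) 0 ≤ 0 := by
        simp only [hb0]
        linarith
      have hsgt : 0 < (fun r => f r - b r) s := by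
        simp only [hfs]
        linarith
      obtain ⟨r, hr, hgr⟩ : ∃ r ∈ Icc (0:ℝ) s, f r - b r = 0 := by
        have := intermediate_value_Icc hs.1 hgc
        have h0mem : (0:ℝ) ∈ Icc ((fun r => f r - b r) 0) ((fun r => f r - b r) s) :=
          ⟨h0, le_of_lt hsgt⟩
        obtain ⟨r, hr, hgr⟩ := this h0mem
        exact ⟨r, hr, hgr⟩
      have hfb : f r = b r := sub_eq_zero.mp hgr
      -- uniqueness from r to s
      have hIccrs : Icc r s ⊆ Icc (0:ℝ) T := fun z hz =>
        ⟨le_trans hr.1 hz.1, le_trans hz.2 hs.2⟩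
      have huniq := ODE_solution_unique (v := v) (K := C) hvlip
        (hfcont.mono hIccrs) ?_ (hbcont.mono hIccrs) ?_ hfb
      · have := huniq ⟨hr.2, le_rfl⟩
        rw [hfs] at this
        exact absurd this (ne_of_gt hy)
      · intro z hz
        have hz0 : 0 ≤ z := le_trans hr.1 hz.1
        have hzT : z < T := lt_of_lt_of_le hz.2 hs.2
        exact hdwa_Ici (hf z ⟨hz0, hzT.le⟩) hz0 hzT
      · intro z hz
        have hz0 : 0 ≤ z := le_trans hr.1 hz.1
        have hzT : z < T := lt_of_lt_of_le hz.2 hs.2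
        exact hdwa_Ici (hb z ⟨hz0, hzT.le⟩) hz0 hzT
    have hρ0 : ρ 0 (f 0) = 0 := hsupp (f 0) (le_trans (le_of_lt hcross) (le_abs_self _))
    -- transport along f via Gronwall
    set g : ℝ → ℝ := fun r => ρ r (f r) with hg
    have hgc : ContinuousOn g (Icc 0 T) :=
      hρ_smooth.continuous.comp_continuousOn (continuousOn_id.prodMk hfcont)
    have hg' : ∀ r ∈ Ico (0:ℝ) s,
        HasDerivWithinAt g (-(deriv (fun z => u r z) (f r)) * g r) (Ici r) r := by
      intro r hr
      have hrT : r < T := lt_of_lt_of_le hr.2 hs.2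
      have hfr : HasDerivWithinAt f (u r (f r)) (Ici r) r :=
        hdwa_Ici (hfu r ⟨hr.1, hrT.le⟩) hr.1 hrT
      have hcurve : HasDerivWithinAt (fun p : ℝ => (p, f p)) ((1:ℝ), u r (f r)) (Ici r) r :=
        (hasDerivAt_id r).hasDerivWithinAt.prodMk hfr
      have hD : HasFDerivAt (Function.uncurry ρ)
          (fderiv ℝ (Function.uncurry ρ) (r, f r)) (r, f r) :=
        (hρ_smooth.differentiable (by simp) _).hasFDerivAt
      have hcomp := hD.comp_hasDerivWithinAt r hcurve
      rw [fderiv_split hρ_smooth] at hcomp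
      refine hcomp.congr_deriv ?_
      have hp1 : HasDerivAt (fun y => ρ r y)
          ((fderiv ℝ (Function.uncurry ρ) (r, f r)) (0, 1)) (f r) :=
        hasDerivAt_slice_x hρ_smooth r (f r)
      have hp2 : HasDerivAt (fun y => u r y)
          ((fderiv ℝ (Function.uncurry u) (r, f r)) (0, 1)) (f r) :=
        hasDerivAt_slice_x hu_smooth r (f r)
      have e1 : deriv (fun y => ρ r y * u r y) (f r) = _ := (hp1.mul hp2).deriv
      have e2 := hmass r (f r) hr.1
      rw [e1] at e2
      rw [hp1.deriv, hp2.deriv]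
      simp only [hg]
      linear_combination e2
    have hgron := norm_le_gronwallBound_of_norm_deriv_right_le
      (f := g) (f' := fun r => -(deriv (fun z => u r z) (f r)) * g r)
      (δ := 0) (K := C₀) (ε := 0) (a := 0) (b := s)
      (hgc.mono (Icc_subset_Icc_right hs.2)) hg'
      (by simp only [hg]; rw [hρ0]; simp) ?_
    · have := hgron s ⟨hs.1, le_rfl⟩
      rw [gronwallBound_ε0_δ0] at this
      have hgs : g s = 0 := by
        have h1 : ‖g s‖ ≤ 0 := by simpa using this
        have h2 : 0 ≤ ‖g s‖ := norm_nonneg _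
        have : ‖g s‖ = 0 := le_antisymm h1 h2
        exact norm_eq_zero.mp this
      simp only [hg, hfs] at hgs
      exact hgs
    · intro r hr
      rw [norm_mul, norm_neg, Real.norm_eq_abs (deriv (fun z => u r z) (f r))]
      have hb1 : |deriv (fun z => u r z) (f r)| ≤ C₀ :=
        hC₀ r (f r) hr.1 (le_trans hr.2.le hs.2)
      have := mul_le_mul_of_nonneg_right hb1 (norm_nonneg (g r))
      linarith
  -- vacuum on the closed half-line
  have vac : ∀ s ∈ Icc (0:ℝ) T, ∀ y, b s ≤ y → ρ s y = 0 := by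
    intro s hs y hy
    rcases eq_or_lt_of_le hy with h | h
    · subst h
      exact right_limit_zero (hρslice s).continuous (key s hs)
    · exact key s hs y h
  -- velocity vanishes on the half-line
  have uz : ∀ s ∈ Icc (0:ℝ) T, ∀ y, b s ≤ y → u s y = 0 := by
    intro s hs
    exact vacuum_u_zero hlam hρ_smooth hu_smooth hs.1
      (fun x => hmass s x hs.1) (fun x => hmom s x hs.1)
      (hu_L2 s hs.1) (vac s hs)
  -- b is constant
  have bconst : ∀ s ∈ Icc (0:ℝ) T, b s = R := by
    have hder : ∀ s ∈ Ico (0:ℝ) T, HasDerivWithinAt b 0 (Ici s) s := by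
      intro s hs
      have h1 := hdwa_Ici (hbu s ⟨hs.1, hs.2.le⟩) hs.1 hs.2
      have h2 : u s (b s) = 0 := uz s ⟨hs.1, hs.2.le⟩ (b s) le_rfl
      rwa [h2] at h1
    intro s hs
    have := constant_of_has_deriv_right_zero hbcont hder s hs
    rw [this, hb0]
  have ht₁T : t₁ ∈ Icc (0:ℝ) T := ⟨ht₁, by linarith⟩
  have hbt₁ : b t₁ = R := bconst t₁ ht₁T
  constructor
  · exact vac t₁ ht₁T x₁ (by rw [hbt₁]; exact hx₁)
  · exact uz t₁ ht₁T x₁ (by rw [hbt₁]; exact hx₁)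

end Main

/-- Invariance of the support for the 1D isothermal compressible Navier–Stokes system:
if the initial density vanishes outside `[-R, R]`, then the density and the velocity
vanish outside `[-R, R]` for all times. -/
theorem support_invariance_1d
    (μ lam a R : ℝ) (hμ : 0 < μ) (hlam : 0 < lam + 2 * μ) (ha : 0 < a) (hR : 0 < R)
    (ρ u : ℝ → ℝ → ℝ)
    (hρ_smooth : ContDiff ℝ (⊤ : ℕ∞) (Function.uncurry ρ))
    (hu_smooth : ContDiff ℝ (⊤ : ℕ∞) (Function.uncurry u))
    (hρ_nonneg : ∀ t x, 0 ≤ ρ t x)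
    (hmass : ∀ t x, 0 ≤ t →
      deriv (fun s => ρ s x) t + deriv (fun y => ρ t y * u t y) x = 0)
    (hmom : ∀ t x, 0 ≤ t →
      deriv (fun s => ρ s x * u s x) t + deriv (fun y => ρ t y * u t y ^ 2) x
        + a * deriv (fun y => ρ t y) x
        = (lam + 2 * μ) * deriv (deriv (fun y => u t y)) x)
    (hρ_L2 : ∀ t, 0 ≤ t → Integrable (fun x => (ρ t x) ^ 2))
    (hu_L2 : ∀ t, 0 ≤ t → Integrable (fun x => (u t x) ^ 2))
    (hux_L2 : ∀ t, 0 ≤ t → Integrable (fun x => (deriv (fun y => u t y) x) ^ 2))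
    (huxx_L2 : ∀ t, 0 ≤ t → Integrable (fun x => (deriv (deriv (fun y => u t y)) x) ^ 2))
    (hux_bdd : ∀ T, 0 < T → ∃ C, ∀ t x, 0 ≤ t → t ≤ T → |deriv (fun y => u t y) x| ≤ C)
    (hsupp : ∀ x, R ≤ |x| → ρ 0 x = 0) :
    ∀ t, 0 ≤ t → ∀ x : ℝ, R ≤ |x| → ρ t x = 0 ∧ u t x = 0 := by
  -- right side
  have hright := right_side μ lam a R hlam hR ρ u hρ_smooth hu_smooth hmass hmom
    hu_L2 hux_bdd hsupp
  -- reflected solution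
  set ρ' : ℝ → ℝ → ℝ := fun s z => ρ s (-z) with hρ'
  set u' : ℝ → ℝ → ℝ := fun s z => -u s (-z) with hu'
  have hN : ContDiff ℝ (⊤ : ℕ∞) (fun p : ℝ × ℝ => (p.1, -p.2)) :=
    contDiff_fst.prodMk contDiff_snd.neg
  have hρ'_smooth : ContDiff ℝ (⊤ : ℕ∞) (Function.uncurry ρ') := hρ_smooth.comp hN
  have hu'_smooth : ContDiff ℝ (⊤ : ℕ∞) (Function.uncurry u') := (hu_smooth.comp hN).neg
  -- pointwise identities for spatial derivatives of reflections
  have refl_deriv : ∀ (F : ℝ → ℝ) (x : ℝ), deriv (fun y => F (-y)) x = -deriv F (-x) :=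
    fun F x => deriv_comp_neg F x
  have hu'x : ∀ t x, deriv (fun y => u' t y) x = deriv (fun z => u t z) (-x) := by
    intro t x
    have h1 : (fun y => u' t y) = (fun y => (fun z => -u t z) (-y)) := rfl
    rw [h1, refl_deriv (fun z => -u t z) x, deriv.fun_neg, neg_neg]
  have hu'xx : ∀ t x, deriv (deriv (fun y => u' t y)) x
      = -deriv (deriv (fun z => u t z)) (-x) := by
    intro t x
    have h1 : deriv (fun y => u' t y) = (fun y => deriv (fun z => u t z) (-y)) := by
      funext y
      exact hu'x t y
    rw [h1, refl_deriv (deriv (fun z => u t z)) x]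
  have hmass' : ∀ t x, 0 ≤ t →
      deriv (fun s => ρ' s x) t + deriv (fun y => ρ' t y * u' t y) x = 0 := by
    intro t x ht
    have h2 : (fun y => ρ' t y * u' t y)
        = (fun y => (fun z => -(ρ t z * u t z)) (-y)) := by
      funext y
      simp only [hρ', hu']
      ring
    have h3 : deriv (fun y => ρ' t y * u' t y) x
        = deriv (fun z => ρ t z * u t z) (-x) := by
      rw [h2, refl_deriv (fun z => -(ρ t z * u t z)) x, deriv.fun_neg, neg_neg]
    have h4 : deriv (fun s => ρ' s x) t = deriv (fun s => ρ s (-x)) t := rfl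
    rw [h3, h4]
    exact hmass t (-x) ht
  have hmom' : ∀ t x, 0 ≤ t →
      deriv (fun s => ρ' s x * u' s x) t + deriv (fun y => ρ' t y * u' t y ^ 2) x
        + a * deriv (fun y => ρ' t y) x
        = (lam + 2 * μ) * deriv (deriv (fun y => u' t y)) x := by
    intro t x ht
    have h1 : deriv (fun s => ρ' s x * u' s x) t
        = -deriv (fun s => ρ s (-x) * u s (-x)) t := by
      have e : (fun s => ρ' s x * u' s x) = (fun s => -(ρ s (-x) * u s (-x))) := by
        funext s
        simp only [hρ', hu']
        ring
      rw [e, deriv.fun_neg]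
    have h2 : deriv (fun y => ρ' t y * u' t y ^ 2) x
        = -deriv (fun z => ρ t z * u t z ^ 2) (-x) := by
      have e : (fun y => ρ' t y * u' t y ^ 2)
          = (fun y => (fun z => ρ t z * u t z ^ 2) (-y)) := by
        funext y
        simp only [hρ', hu']
        ring
      rw [e, refl_deriv (fun z => ρ t z * u t z ^ 2) x]
    have h3 : deriv (fun y => ρ' t y) x = -deriv (fun z => ρ t z) (-x) := by
      have e : (fun y => ρ' t y) = (fun y => (fun z => ρ t z) (-y)) := rfl
      rw [e, refl_deriv (fun z => ρ t z) x]
    rw [h1, h2, h3, hu'xx t x]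
    linear_combination -(hmom t (-x) ht)
  have hu'_L2 : ∀ t, 0 ≤ t → Integrable (fun x => (u' t x) ^ 2) := by
    intro t ht
    have e : (fun x => (u' t x) ^ 2) = (fun x => (fun z => (u t z) ^ 2) (-x)) := by
      funext x
      simp only [hu']
      ring
    rw [e]
    exact (hu_L2 t ht).comp_neg
  have hux_bdd' : ∀ T, 0 < T → ∃ C, ∀ t x, 0 ≤ t → t ≤ T →
      |deriv (fun y => u' t y) x| ≤ C := by
    intro T hT
    obtain ⟨C, hC⟩ := hux_bdd T hT
    exact ⟨C, fun t x ht htT => by rw [hu'x t x]; exact hC t (-x) ht htT⟩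
  have hsupp' : ∀ x, R ≤ |x| → ρ' 0 x = 0 := by
    intro x hx
    simp only [hρ']
    exact hsupp (-x) (by rwa [abs_neg])
  have hleft := right_side μ lam a R hlam hR ρ' u' hρ'_smooth hu'_smooth hmass' hmom'
    hu'_L2 hux_bdd' hsupp'
  intro t ht x hx
  rcases le_or_gt 0 x with hx0 | hx0
  · have : R ≤ x := by rwa [abs_of_nonneg hx0] at hx
    exact hright t ht x this
  · have hxneg : R ≤ -x := by rwa [abs_of_neg hx0] at hx
    obtain ⟨h1, h2⟩ := hleft t ht (-x) hxneg
    constructor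
    · have : ρ' t (-x) = ρ t x := by simp [hρ']
      rwa [this] at h1
    · have : u' t (-x) = -u t x := by simp [hu']
      rw [this] at h2
      linarith
end
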